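/- arXiv:1507.05754 — 13 statements merged into one kernel-verified Lean document; each statement's English description precedes it below -/
import Mathlib

section
/- Let f(x) = Σ_{i=0}^n a_i x^i and g(x) = Σ_{i=1}^m b_i x^i be polynomials with positive coefficients a_0,…,a_n and b_1,…,b_m. If both sequences (a_i) and (b_i) are log-concave (i.e., a_i^2 ≥ a_{i-1}a_{i+1} for 1 ≤ i ≤ n-1 and b_i^2 ≥ b_{i-1}b_{i+1} for 2 ≤ i ≤ m-1), and if (a_i^2 − a_{i-1}a_{i+1})·b_1^2 ≥ a_i·a_{i-1}·b_2 for all 1 ≤ i ≤ n (with a_{n+1} := 0), then the coefficient sequence of the composition f(g(x)) is log-concave. -/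
/-!
Horner's rule writes `f ∘ g = a₀ + g · (f₁ ∘ g)` with `f₁ = divX f`, so one inducts on the degree
of `f`, carrying the stronger invariant that the coefficients are log-concave and positive
exactly on an interval. That invariant survives products: `c_k² - c_{k-1} c_{k+1}` is half a
double sum of products of two `2 × 2` minors, one from each factor, and both minors have the same
sign because the coefficient ratios of each factor decrease. Adding the constant `a₀` only
touches the inequality at `k = 1`, which, once the first two coefficients of `g · (f₁ ∘ g)` are
computed, is the hypothesis at `i = 1`.
-/

open Polynomial Finset

/-- A polynomial (with nonnegative coefficients) has a log-concave coefficient sequence. -/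
def PolyLogConcave (p : Polynomial ℝ) : Prop :=
  ∀ k : ℕ, 1 ≤ k → p.coeff (k - 1) * p.coeff (k + 1) ≤ (p.coeff k) ^ 2

theorem coeff_sum_C_mul_X_pow {R : Type*} [Semiring R] (s : Finset ℕ) (c : ℕ → R) (k : ℕ) :
    (∑ i ∈ s, C (c i) * X ^ i).coeff k = if k ∈ s then c k else 0 := by
  simp

theorem two_mul_sum_mul_sum_sub_eq {ι R : Type*} [CommRing R] (s : Finset ι)
    (M₁ M₂ N₁ N₂ : ι → R) :
    2 * ((∑ i ∈ s, M₁ i * N₁ i) * (∑ i ∈ s, M₂ i * N₂ i)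
      - (∑ i ∈ s, M₁ i * N₂ i) * (∑ i ∈ s, M₂ i * N₁ i)) =
    ∑ i ∈ s, ∑ j ∈ s, (M₁ i * M₂ j - M₁ j * M₂ i) * (N₁ i * N₂ j - N₁ j * N₂ i) := by
  set G : ι → ι → R := fun i j => M₁ i * N₁ i * (M₂ j * N₂ j)
  set H : ι → ι → R := fun i j => M₁ i * N₂ i * (M₂ j * N₁ j)
  calc _ = ∑ i ∈ s, ∑ j ∈ s, (G i j - H i j) + ∑ i ∈ s, ∑ j ∈ s, (G j i - H j i) := by
        rw [Finset.sum_comm (f := fun i j => G j i - H j i)]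
        simp only [G, H, Finset.sum_mul_sum, Finset.sum_sub_distrib]
        ring
    _ = _ := by
        simp only [← Finset.sum_add_distrib]
        refine Finset.sum_congr rfl fun i _ => Finset.sum_congr rfl fun j _ => ?_
        simp only [G, H]
        ring

theorem sum_mul_sum_le_of_minors_nonneg {ι : Type*} [LinearOrder ι] (s : Finset ι)
    (M₁ M₂ N₁ N₂ : ι → ℝ)
    (hM : ∀ i j, i ≤ j → M₁ j * M₂ i ≤ M₁ i * M₂ j)
    (hN : ∀ i j, i ≤ j → N₁ j * N₂ i ≤ N₁ i * N₂ j) :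
    (∑ i ∈ s, M₁ i * N₂ i) * (∑ i ∈ s, M₂ i * N₁ i) ≤
      (∑ i ∈ s, M₁ i * N₁ i) * (∑ i ∈ s, M₂ i * N₂ i) := by
  have hterm : ∀ i j, 0 ≤ (M₁ i * M₂ j - M₁ j * M₂ i) * (N₁ i * N₂ j - N₁ j * N₂ i) := by
    intro i j
    rcases le_total i j with h | h
    · exact mul_nonneg (sub_nonneg.2 (hM i j h)) (sub_nonneg.2 (hN i j h))
    · exact mul_nonneg_of_nonpos_of_nonpos (sub_nonpos.2 (hM j i h)) (sub_nonpos.2 (hN j i h))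
  have := two_mul_sum_mul_sum_sub_eq s M₁ M₂ N₁ N₂
  have : 0 ≤ ∑ i ∈ s, ∑ j ∈ s, (M₁ i * M₂ j - M₁ j * M₂ i) * (N₁ i * N₂ j - N₁ j * N₂ i) :=
    Finset.sum_nonneg fun i _ => Finset.sum_nonneg fun j _ => hterm i j
  linarith

theorem coeff_mul_eq_sum_range {R : Type*} [Semiring R] (p q : R[X]) {K N : ℕ} (h : K < N) :
    (p * q).coeff K = ∑ j ∈ range N, (if j ≤ K then p.coeff (K - j) else 0) * q.coeff j := by
  rw [coeff_mul, ← Finset.Nat.sum_antidiagonal_swap,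
    Finset.Nat.sum_antidiagonal_eq_sum_range_succ_mk]
  symm
  rw [← Finset.sum_subset (range_subset_range.2 h)]
  · refine Finset.sum_congr rfl fun j hj => ?_
    rw [mem_range] at hj
    simp [if_pos (Nat.lt_succ_iff.1 hj)]
  · intro j _ hj
    rw [mem_range] at hj
    rw [if_neg (by omega), zero_mul]

theorem polyLogConcave_mul {p q : ℝ[X]} (hp₀ : ∀ k, 0 ≤ p.coeff k) (hq₀ : ∀ k, 0 ≤ q.coeff k)
    (hp : ∀ t s, t ≤ s → p.coeff t * p.coeff (s + 1) ≤ p.coeff (t + 1) * p.coeff s)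
    (hq : ∀ t s, t ≤ s → q.coeff t * q.coeff (s + 1) ≤ q.coeff (t + 1) * q.coeff s) :
    PolyLogConcave (p * q) := by
  intro k hk
  -- With `T K j = p_{K-j}`, each of `c_{k+1}, c_k, c_{k-1}` (the coefficients of `p * q`) is a sum
  -- of `T _ j` against `q_j` or against `(X * q)_j = q_{j-1}`.
  set T : ℕ → ℕ → ℝ := fun K j => if j ≤ K then p.coeff (K - j) else 0
  have hT₀ : ∀ K j, 0 ≤ T K j := fun K j => by
    simp only [T]; split_ifs
    exacts [hp₀ _, le_rfl]
  have hT : ∀ i j, i ≤ j → T k j * T (k + 1) i ≤ T k i * T (k + 1) j := by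
    intro i j hij
    by_cases hj : j ≤ k
    · simp only [T, if_pos hj, if_pos (hij.trans hj), if_pos (by omega : i ≤ k + 1),
        if_pos (by omega : j ≤ k + 1), show k + 1 - i = k - i + 1 by omega,
        show k + 1 - j = k - j + 1 by omega]
      exact (hp (k - j) (k - i) (by omega)).trans_eq (mul_comm _ _)
    · simp only [T, if_neg hj, zero_mul]
      exact mul_nonneg (hT₀ _ _) (hT₀ _ _)
  have hXq : ∀ i j, i ≤ j → q.coeff j * (X * q).coeff i ≤ q.coeff i * (X * q).coeff j := by
    rintro (_ | i) j hij
    · rw [coeff_X_mul_zero, mul_zero]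
      exact mul_nonneg (hq₀ _) (by cases j <;> simp [hq₀])
    · obtain ⟨j, rfl⟩ : ∃ j', j = j' + 1 := ⟨j - 1, by omega⟩
      rw [coeff_X_mul, coeff_X_mul, mul_comm]
      exact hq i j (by omega)
  have hk₁ : (p * q).coeff (k + 1) = ∑ j ∈ range (k + 2), T (k + 1) j * q.coeff j :=
    coeff_mul_eq_sum_range p q (by omega)
  have hk₀ : (p * q).coeff k = ∑ j ∈ range (k + 2), T k j * q.coeff j :=
    coeff_mul_eq_sum_range p q (by omega)
  have hkX : (p * q).coeff k = ∑ j ∈ range (k + 2), T (k + 1) j * (X * q).coeff j := by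
    rw [← coeff_mul_eq_sum_range p (X * q) (by omega), mul_left_comm, coeff_X_mul]
  have hkpred : (p * q).coeff (k - 1) = ∑ j ∈ range (k + 2), T k j * (X * q).coeff j := by
    rw [← coeff_mul_eq_sum_range p (X * q) (by omega), mul_left_comm]
    obtain ⟨k, rfl⟩ : ∃ k', k = k' + 1 := ⟨k - 1, by omega⟩
    rw [coeff_X_mul, Nat.add_sub_cancel]
  have := sum_mul_sum_le_of_minors_nonneg (range (k + 2)) (T k) (T (k + 1)) q.coeff
    (X * q).coeff hT hXq
  rwa [← hk₁, ← hk₀, ← hkX, ← hkpred, ← sq] at this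

/-- Positivity on the whole interval (no internal zeros) is what makes log-concavity stable under
products. -/
structure PolyLogConcaveOn (p : ℝ[X]) (lo hi : ℕ) : Prop where
  coeff_eq_zero_of_lt : ∀ k < lo, p.coeff k = 0
  coeff_eq_zero_of_gt : ∀ k, hi < k → p.coeff k = 0
  coeff_pos : ∀ k, lo ≤ k → k ≤ hi → 0 < p.coeff k
  logConcave : PolyLogConcave p

namespace PolyLogConcaveOn

variable {p q : ℝ[X]} {lo hi lo' hi' : ℕ}

theorem coeff_nonneg (hp : PolyLogConcaveOn p lo hi) (k : ℕ) : 0 ≤ p.coeff k := by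
  rcases lt_or_ge k lo with hk | hk
  · exact (hp.coeff_eq_zero_of_lt k hk).ge
  rcases le_or_gt k hi with hk' | hk'
  · exact (hp.coeff_pos k hk hk').le
  · exact (hp.coeff_eq_zero_of_gt k hk').ge

theorem coeff_mul_coeff_succ_le (hp : PolyLogConcaveOn p lo hi) {t s : ℕ} (hts : t ≤ s) :
    p.coeff t * p.coeff (s + 1) ≤ p.coeff (t + 1) * p.coeff s := by
  induction s, hts using Nat.le_induction with
  | base => rw [mul_comm]
  | succ s hts ih =>
    rcases lt_or_ge s lo with hs | hs
    · rw [hp.coeff_eq_zero_of_lt t (by omega), zero_mul]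
      exact mul_nonneg (hp.coeff_nonneg _) (hp.coeff_nonneg _)
    rcases le_or_gt s hi with hs' | hs'
    · have hlc : p.coeff s * p.coeff (s + 2) ≤ p.coeff (s + 1) ^ 2 :=
        hp.logConcave (s + 1) (by omega)
      refine le_of_mul_le_mul_right ?_ (hp.coeff_pos s hs hs')
      calc p.coeff t * p.coeff (s + 2) * p.coeff s
          = p.coeff t * (p.coeff s * p.coeff (s + 2)) := by ring
        _ ≤ p.coeff t * p.coeff (s + 1) ^ 2 := by gcongr; exact hp.coeff_nonneg t
        _ = p.coeff t * p.coeff (s + 1) * p.coeff (s + 1) := by ring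
        _ ≤ p.coeff (t + 1) * p.coeff s * p.coeff (s + 1) := by
            gcongr
            · exact hp.coeff_nonneg _
        _ = p.coeff (t + 1) * p.coeff (s + 1) * p.coeff s := by ring
    · rw [hp.coeff_eq_zero_of_gt (s + 2) (by omega), mul_zero]
      exact mul_nonneg (hp.coeff_nonneg _) (hp.coeff_nonneg _)

theorem C {c : ℝ} (hc : 0 < c) : PolyLogConcaveOn (C c) 0 0 where
  coeff_eq_zero_of_lt k hk := absurd hk k.not_lt_zero
  coeff_eq_zero_of_gt k hk := coeff_C_of_ne_zero hk.ne'
  coeff_pos k _ hk := by rwa [Nat.le_zero.1 hk, coeff_C_zero]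
  logConcave k hk := by
    rw [coeff_C_of_ne_zero (by omega : k + 1 ≠ 0), mul_zero]
    positivity

theorem mul (hp : PolyLogConcaveOn p lo hi) (hq : PolyLogConcaveOn q lo' hi') (h : lo ≤ hi)
    (h' : lo' ≤ hi') : PolyLogConcaveOn (p * q) (lo + lo') (hi + hi') where
  coeff_eq_zero_of_lt k hk := by
    rw [coeff_mul]
    refine Finset.sum_eq_zero fun x hx => ?_
    rw [HasAntidiagonal.mem_antidiagonal] at hx
    rcases lt_or_ge x.1 lo with h₁ | h₁
    · rw [hp.coeff_eq_zero_of_lt _ h₁, zero_mul]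
    · rw [hq.coeff_eq_zero_of_lt _ (by omega), mul_zero]
  coeff_eq_zero_of_gt k hk := by
    rw [coeff_mul]
    refine Finset.sum_eq_zero fun x hx => ?_
    rw [HasAntidiagonal.mem_antidiagonal] at hx
    rcases lt_or_ge hi x.1 with h₁ | h₁
    · rw [hp.coeff_eq_zero_of_gt _ h₁, zero_mul]
    · rw [hq.coeff_eq_zero_of_gt _ (by omega), mul_zero]
  coeff_pos k hk hk' := by
    rw [coeff_mul]
    refine Finset.sum_pos' (fun x _ => mul_nonneg (hp.coeff_nonneg _) (hq.coeff_nonneg _))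
      ⟨(max lo (k - hi'), k - max lo (k - hi')),
        by rw [HasAntidiagonal.mem_antidiagonal]; omega, ?_⟩
    exact mul_pos (hp.coeff_pos _ (by omega) (by omega)) (hq.coeff_pos _ (by omega) (by omega))
  logConcave := polyLogConcave_mul hp.coeff_nonneg hq.coeff_nonneg
    (fun _ _ => hp.coeff_mul_coeff_succ_le) (fun _ _ => hq.coeff_mul_coeff_succ_le)

theorem C_add (hq : PolyLogConcaveOn q 1 hi) {c : ℝ} (hc : 0 < c)
    (h₁ : c * q.coeff 2 ≤ q.coeff 1 ^ 2) : PolyLogConcaveOn (Polynomial.C c + q) 0 hi := by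
  have hcoeff : ∀ k, k ≠ 0 → (Polynomial.C c + q).coeff k = q.coeff k := fun k hk => by
    rw [coeff_add, coeff_C_of_ne_zero hk, zero_add]
  refine ⟨fun k hk => absurd hk k.not_lt_zero, fun k hk => ?_, fun k _ hk => ?_, fun k hk => ?_⟩
  · rw [hcoeff k (by omega)]
    exact hq.coeff_eq_zero_of_gt k hk
  · rcases Nat.eq_zero_or_pos k with rfl | hk₀
    · rwa [coeff_add, coeff_C_zero, hq.coeff_eq_zero_of_lt 0 one_pos, add_zero]
    · rw [hcoeff k hk₀.ne']
      exact hq.coeff_pos k hk₀ hk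
  · rcases eq_or_lt_of_le hk with rfl | hk
    · rwa [coeff_add, coeff_C_zero, hq.coeff_eq_zero_of_lt 0 one_pos, add_zero,
        hcoeff 2 two_ne_zero, hcoeff 1 one_ne_zero]
    · rw [hcoeff k (by omega), hcoeff (k - 1) (by omega), hcoeff (k + 1) (by omega)]
      exact hq.logConcave k hk.le

end PolyLogConcaveOn

theorem polyLogConcaveOn_sum_Icc {lo hi : ℕ} {b : ℕ → ℝ}
    (hpos : ∀ i, lo ≤ i → i ≤ hi → 0 < b i)
    (hlc : ∀ i, lo < i → i < hi → b (i - 1) * b (i + 1) ≤ b i ^ 2) :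
    PolyLogConcaveOn (∑ i ∈ Icc lo hi, C (b i) * X ^ i) lo hi := by
  have hcoeff : ∀ k, lo ≤ k → k ≤ hi →
      (∑ i ∈ Icc lo hi, C (b i) * X ^ i).coeff k = b k := fun k h₁ h₂ => by
    rw [coeff_sum_C_mul_X_pow, if_pos (mem_Icc.2 ⟨h₁, h₂⟩)]
  have hzero : ∀ k, k < lo ∨ hi < k →
      (∑ i ∈ Icc lo hi, C (b i) * X ^ i).coeff k = 0 := fun k hk => by
    rw [coeff_sum_C_mul_X_pow, if_neg (by rw [mem_Icc]; omega)]
  refine ⟨fun k hk => hzero k (.inl hk), fun k hk => hzero k (.inr hk),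
    fun k h₁ h₂ => (hcoeff k h₁ h₂).symm ▸ hpos k h₁ h₂, fun k hk => ?_⟩
  by_cases hk : lo < k ∧ k < hi
  · rw [hcoeff k (by omega) (by omega), hcoeff (k - 1) (by omega) (by omega),
      hcoeff (k + 1) (by omega) (by omega)]
    exact hlc k hk.1 hk.2
  · rcases (by omega : (k - 1 < lo ∨ hi < k - 1) ∨ (k + 1 < lo ∨ hi < k + 1)) with h | h
    · rw [hzero _ h, zero_mul]
      positivity
    · rw [hzero _ h, mul_zero]
      positivity

section Composition

variable {R : Type*} [CommSemiring R] {g h : R[X]}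

theorem comp_eq_C_add_mul_divX_comp (p g : R[X]) :
    p.comp g = C (p.coeff 0) + g * p.divX.comp g := by
  conv_lhs => rw [← X_mul_divX_add p]
  rw [add_comp, mul_comp, X_comp, C_comp, add_comm]

theorem coeff_zero_comp_of_coeff_zero (hg : g.coeff 0 = 0) (p : R[X]) :
    (p.comp g).coeff 0 = p.coeff 0 := by
  rw [coeff_zero_eq_eval_zero, eval_comp, ← coeff_zero_eq_eval_zero, hg,
    ← coeff_zero_eq_eval_zero]

theorem coeff_one_mul_of_coeff_zero (hg : g.coeff 0 = 0) :
    (g * h).coeff 1 = g.coeff 1 * h.coeff 0 := by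
  simp [coeff_mul, Finset.Nat.antidiagonal_succ, hg]

theorem coeff_two_mul_of_coeff_zero (hg : g.coeff 0 = 0) :
    (g * h).coeff 2 = g.coeff 1 * h.coeff 1 + g.coeff 2 * h.coeff 0 := by
  simp [coeff_mul, Finset.Nat.antidiagonal_succ, hg]

theorem coeff_one_comp_of_coeff_zero (hg : g.coeff 0 = 0) (p : R[X]) :
    (p.comp g).coeff 1 = p.coeff 1 * g.coeff 1 := by
  rw [comp_eq_C_add_mul_divX_comp, coeff_add, coeff_C_of_ne_zero one_ne_zero, zero_add,
    coeff_one_mul_of_coeff_zero hg, coeff_zero_comp_of_coeff_zero hg, coeff_divX, mul_comm]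

end Composition

theorem PolyLogConcaveOn.comp {g : ℝ[X]} {m : ℕ} (hg : PolyLogConcaveOn g 1 m) (hm : 1 ≤ m)
    {n : ℕ} {f : ℝ[X]} (hf : f.natDegree ≤ n) (hpos : ∀ i ≤ n, 0 < f.coeff i)
    (hkey : ∀ i, 1 ≤ i → i ≤ n → f.coeff i * f.coeff (i - 1) * g.coeff 2 ≤
      (f.coeff i ^ 2 - f.coeff (i - 1) * f.coeff (i + 1)) * g.coeff 1 ^ 2) :
    PolyLogConcaveOn (f.comp g) 0 (n * m) := by
  induction n generalizing f with
  | zero =>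
    rw [eq_C_of_natDegree_le_zero hf, C_comp, zero_mul]
    exact .C (hpos 0 le_rfl)
  | succ n ih =>
    have hdivX : PolyLogConcaveOn (f.divX.comp g) 0 (n * m) := by
      refine ih (by rw [natDegree_divX_eq_natDegree_tsub_one]; omega)
        (fun i hi => by rw [coeff_divX]; exact hpos _ (by omega)) fun i hi₁ hi => ?_
      simpa only [coeff_divX, Nat.sub_add_cancel hi₁, Nat.add_sub_cancel] using
        hkey (i + 1) (by omega) (by omega)
    have hg₀ : g.coeff 0 = 0 := hg.coeff_eq_zero_of_lt 0 one_pos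
    have hprod : PolyLogConcaveOn (g * f.divX.comp g) 1 ((n + 1) * m) := by
      rw [Nat.succ_mul, add_comm]
      exact hg.mul hdivX hm (Nat.zero_le _)
    rw [comp_eq_C_add_mul_divX_comp]
    refine hprod.C_add (hpos 0 (Nat.zero_le _)) ?_
    rw [coeff_one_mul_of_coeff_zero hg₀, coeff_two_mul_of_coeff_zero hg₀,
      coeff_zero_comp_of_coeff_zero hg₀, coeff_one_comp_of_coeff_zero hg₀, coeff_divX, coeff_divX]
    linear_combination hkey 1 le_rfl (by omega)

theorem stmt0_general (n m : ℕ) (a b : ℕ → ℝ)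
    (ha_pos : ∀ i ≤ n, 0 < a i) (ha_top : a (n + 1) = 0)
    (hb_pos : ∀ i, 1 ≤ i → i ≤ m → 0 < b i) (hb_zero : ∀ i, m < i → b i = 0)
    (hm : 1 ≤ m)
    (hb_lc : ∀ i, 2 ≤ i → i ≤ m - 1 → b (i - 1) * b (i + 1) ≤ (b i) ^ 2)
    (hkey : ∀ i, 1 ≤ i → i ≤ n →
      a i * a (i - 1) * b 2 ≤ ((a i) ^ 2 - a (i - 1) * a (i + 1)) * (b 1) ^ 2)
    (f g : Polynomial ℝ)
    (hf : f = ∑ i ∈ Finset.range (n + 1), C (a i) * X ^ i)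
    (hg : g = ∑ i ∈ Finset.Icc 1 m, C (b i) * X ^ i) :
    PolyLogConcave (f.comp g) := by
  have hfa : ∀ i ≤ n + 1, f.coeff i = a i := fun i hi => by
    rcases hi.lt_or_eq with hi | rfl
    · rw [hf, coeff_sum_C_mul_X_pow, if_pos (mem_range.2 hi)]
    · rw [hf, coeff_sum_C_mul_X_pow, if_neg (by simp), ha_top]
  have hgb : ∀ j, 1 ≤ j → g.coeff j = b j := fun j hj => by
    rw [hg, coeff_sum_C_mul_X_pow]
    split_ifs with hjm
    · rfl
    · rw [hb_zero j (by rw [mem_Icc] at hjm; omega)]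
  have hgLC : PolyLogConcaveOn g 1 m :=
    hg ▸ polyLogConcaveOn_sum_Icc hb_pos fun i h₁ h₂ => hb_lc i h₁ (by omega)
  have hdeg : f.natDegree ≤ n :=
    hf ▸ natDegree_sum_le_of_forall_le _ _ fun i hi => (natDegree_C_mul_X_pow_le _ _).trans
      (Nat.lt_succ_iff.1 (mem_range.1 hi))
  refine (hgLC.comp hm hdeg (fun i hi => hfa i (by omega) ▸ ha_pos i hi)
    fun i h₁ h₂ => ?_).logConcave
  rw [hfa i (by omega), hfa (i - 1) (by omega), hfa (i + 1) (by omega), hgb 1 le_rfl,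
    hgb 2 one_le_two]
  exact hkey i h₁ h₂

theorem stmt0 (n m : ℕ) (a b : ℕ → ℝ)
    (ha_pos : ∀ i ≤ n, 0 < a i) (ha_top : a (n + 1) = 0)
    (hb_pos : ∀ i, 1 ≤ i → i ≤ m → 0 < b i) (hb_zero : ∀ i, m < i → b i = 0)
    (hm : 1 ≤ m)
    (ha_lc : ∀ i, 1 ≤ i → i ≤ n - 1 → a (i - 1) * a (i + 1) ≤ (a i) ^ 2)
    (hb_lc : ∀ i, 2 ≤ i → i ≤ m - 1 → b (i - 1) * b (i + 1) ≤ (b i) ^ 2)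
    (hkey : ∀ i, 1 ≤ i → i ≤ n →
      a i * a (i - 1) * b 2 ≤ ((a i) ^ 2 - a (i - 1) * a (i + 1)) * (b 1) ^ 2)
    (f g : Polynomial ℝ)
    (hf : f = ∑ i ∈ Finset.range (n + 1), C (a i) * X ^ i)
    (hg : g = ∑ i ∈ Finset.Icc 1 m, C (b i) * X ^ i) :
    PolyLogConcave (f.comp g) :=
  stmt0_general n m a b ha_pos ha_top hb_pos hb_zero hm hb_lc hkey f g hf hg
end

section
/- Let f(x) = Σ_{i=0}^n a_i x^i and g(x) = Σ_{i=1}^m b_i x^i be polynomials with positive coefficients. If the coefficient sequence of g is log-concave and a_{i-1} ≤ b_1·a_i for all 1 ≤ i ≤ n, then the coefficient sequence of the composition f(g(x)) is unimodal. -/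
open Polynomial Finset

/-- A polynomial (with nonnegative, eventually zero coefficients) has a unimodal
coefficient sequence. -/
def PolyUnimodal (p : Polynomial ℝ) : Prop :=
  ∃ m : ℕ, (∀ i, i < m → p.coeff i ≤ p.coeff (i + 1)) ∧
    (∀ i, m ≤ i → p.coeff (i + 1) ≤ p.coeff i)


lemma conv_unimodal (p u w : ℕ → ℝ) (m : ℕ) (hm : 1 ≤ m)
    (hp0 : p 0 = 0)
    (hp_pos : ∀ j, 1 ≤ j → j ≤ m → 0 < p j)
    (hp_zero : ∀ j, m < j → p j = 0)
    (hp_ratio : ∀ α β, 1 ≤ α → α ≤ β → β + 1 ≤ m → p α * p (β+1) ≤ p β * p (α+1))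
    (hu_nonneg : ∀ k, 0 ≤ u k) (M : ℕ)
    (hu_inc : ∀ i, i < M → u i ≤ u (i+1)) (hu_dec : ∀ i, M ≤ i → u (i+1) ≤ u i)
    (hw : ∀ n, w n = ∑ k ∈ range (n+1), p k * u (n-k)) :
    ∃ M' : ℕ, (∀ i, i < M' → w i ≤ w (i+1)) ∧ (∀ i, M' ≤ i → w (i+1) ≤ w i) := by
  have hp_nonneg : ∀ j, 0 ≤ p j := by
    intro j
    rcases Nat.eq_zero_or_pos j with h | h
    · simp [h, hp0]
    rcases le_or_gt j m with h2 | h2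
    · exact (hp_pos j h h2).le
    · simp [hp_zero j h2]
  set D : ℕ → ℝ := fun k => u k - if k = 0 then 0 else u (k-1) with hD
  have hD0 : D 0 = u 0 := by simp [hD]
  have hDs : ∀ k, D (k+1) = u (k+1) - u k := by intro k; simp [hD]
  have hDpos : ∀ k, k ≤ M → 0 ≤ D k := by
    intro k hk
    cases k with
    | zero => rw [hD0]; exact hu_nonneg 0
    | succ k => rw [hDs]; have := hu_inc k (by omega); linarith
  have hDneg : ∀ k, M + 1 ≤ k → D k ≤ 0 := by
    intro k hk
    cases k with
    | zero => omega
    | succ k => rw [hDs]; have := hu_dec k (by omega); linarith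
  -- key identity
  have hA : ∀ n, w (n+1) - w n = ∑ k ∈ range (n+2), p (n+1-k) * D k := by
    intro n
    have split : ∀ k, p (n+1-k) * D k
        = p (n+1-k) * u k - p (n+1-k) * (if k = 0 then 0 else u (k-1)) := by
      intro k; rw [hD]; ring
    rw [Finset.sum_congr rfl (fun k _ => split k), Finset.sum_sub_distrib]
    have h1 : ∑ k ∈ range (n+2), p (n+1-k) * u k = w (n+1) := by
      rw [hw]
      rw [← Finset.sum_range_reflect (fun k => p k * u (n+1-k)) (n+2)]
      apply Finset.sum_congr rfl
      intro j hj
      simp only [Finset.mem_range] at hj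
      have e1 : n + 2 - 1 - j = n + 1 - j := by omega
      have e2 : n + 1 - (n + 1 - j) = j := by omega
      simp only [e1, e2]
    have h2 : ∑ k ∈ range (n+2), p (n+1-k) * (if k = 0 then 0 else u (k-1)) = w n := by
      rw [Finset.sum_range_succ' (fun k => p (n+1-k) * (if k = 0 then 0 else u (k-1))) (n+1),
        hw, ← Finset.sum_range_reflect (fun k => p k * u (n-k)) (n+1)]
      norm_num
      apply Finset.sum_congr rfl
      intro j hj
      simp only [Finset.mem_range] at hj
      have e1 : n + 1 - (j + 1) = n - j := by omega
      have e2 : n - (n - j) = j := by omega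
      rw [e1, e2]
    rw [h1, h2]
  -- tail
  have tail : ∀ n, M + m ≤ n → w (n+1) - w n ≤ 0 := by
    intro n hn
    rw [hA n]
    apply Finset.sum_nonpos
    intro k hk
    rcases le_or_gt k M with h | h
    · have : m < n + 1 - k := by omega
      rw [hp_zero _ this, zero_mul]
    · exact mul_nonpos_of_nonneg_of_nonpos (hp_nonneg _) (hDneg k (by omega))
  -- key step
  have key : ∀ n, n + 1 ≤ M + m → 0 ≤ w (n+2) - w (n+1) → 0 ≤ w (n+1) - w n := by
    intro n hn hA1
    -- choose lambda
    obtain ⟨lam, hlam0, hterm⟩ :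
        ∃ lam : ℝ, 0 ≤ lam ∧ ∀ k ∈ range (n+3),
          lam * (p (n+2-k) * D k) ≤ p (n+1-k) * D k := by
      rcases le_or_gt n M with hnM | hnM
      · refine ⟨0, le_refl 0, ?_⟩
        intro k _
        rw [zero_mul]
        rcases le_or_gt k M with h | h
        · exact mul_nonneg (hp_nonneg _) (hDpos k h)
        · have : n + 1 - k = 0 := by omega
          rw [this, hp0, zero_mul]
      · set J := n - M with hJ
        have hJ1 : 1 ≤ J := by omega
        have hJm : J + 1 ≤ m := by omega
        have hpJ1 : 0 < p (J+1) := hp_pos _ (by omega) hJm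
        refine ⟨p J / p (J+1), div_nonneg (hp_nonneg _) hpJ1.le, ?_⟩
        intro k hk
        simp only [Finset.mem_range] at hk
        rcases le_or_gt k M with h | h
        · -- D k ≥ 0 ; need lam * p (n+2-k) ≤ p (n+1-k)
          set j := n + 1 - k with hjdef
          have hjJ : J + 1 ≤ j := by omega
          have hj2 : n + 2 - k = j + 1 := by omega
          have hmain : p J / p (J+1) * p (j+1) ≤ p j := by
            rw [div_mul_eq_mul_div, div_le_iff₀ hpJ1]
            rcases le_or_gt (j+1) m with hc | hc
            · exact hp_ratio J j (by omega) (by omega) hc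
            · rw [hp_zero _ hc, mul_zero]
              exact mul_nonneg (hp_nonneg _) (hp_nonneg _)
          rw [hj2, ← mul_assoc]
          exact mul_le_mul_of_nonneg_right hmain (hDpos k h)
        · -- D k ≤ 0; need p (n+1-k) ≤ lam * p (n+2-k)
          rcases le_or_gt k (n+1) with hk2 | hk2
          · set j := n + 1 - k with hjdef
            have hjJ : j ≤ J := by omega
            have hj2 : n + 2 - k = j + 1 := by omega
            have hmain : p j ≤ p J / p (J+1) * p (j+1) := by
              rw [div_mul_eq_mul_div, le_div_iff₀ hpJ1]
              rcases Nat.eq_zero_or_pos j with hj0 | hj0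
              · rw [hj0, hp0, zero_mul]
                exact mul_nonneg (hp_nonneg _) (hp_nonneg _)
              · exact hp_ratio j J hj0 hjJ hJm
            rw [hj2, ← mul_assoc]
            exact mul_le_mul_of_nonpos_right hmain (hDneg k (by omega))
          · have e1 : n + 1 - k = 0 := by omega
            have e2 : n + 2 - k = 0 := by omega
            simp [e1, e2, hp0]
    rw [hA n]
    have hext : ∑ k ∈ range (n+3), p (n+1-k) * D k
        = ∑ k ∈ range (n+2), p (n+1-k) * D k := by
      rw [Finset.sum_range_succ]
      have e : n + 1 - (n+2) = 0 := by omega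
      rw [e, hp0, zero_mul, add_zero]
    rw [← hext]
    calc (0:ℝ) ≤ lam * (w (n+2) - w (n+1)) := mul_nonneg hlam0 hA1
    _ = ∑ k ∈ range (n+3), lam * (p (n+2-k) * D k) := by
        rw [hA (n+1), Finset.mul_sum]
    _ ≤ ∑ k ∈ range (n+3), p (n+1-k) * D k := Finset.sum_le_sum hterm
  -- assembly
  by_cases hex : ∃ n, w (n+1) - w n < 0
  · set M' := Nat.find hex with hM'
    refine ⟨M', ?_, ?_⟩
    · intro i hi
      have := Nat.find_min hex hi
      push_neg at this
      linarith
    · intro i hi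
      rcases le_or_gt (M + m) i with hMm | hMm
      · have := tail i hMm; linarith
      by_contra hcon
      push_neg at hcon
      have hAi : 0 < w (i+1) - w i := by linarith
      have down : ∀ d, d ≤ i - M' → 0 ≤ w (i - d + 1) - w (i - d) := by
        intro d
        induction d with
        | zero => intro _; simpa using hAi.le
        | succ d ih =>
          intro hd
          have h1 := ih (by omega)
          have e1 : i - d = (i - (d+1)) + 1 := by omega
          rw [e1] at h1
          exact key (i - (d+1)) (by omega) h1
      have := down (i - M') (le_refl _)
      have e : i - (i - M') = M' := by omega
      rw [e] at this
      have := Nat.find_spec hex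
      rw [← hM'] at this
      linarith
  · push_neg at hex
    refine ⟨M + m, ?_, ?_⟩
    · intro i _
      have := hex i; linarith
    · intro i hi
      have := tail i hi; linarith


lemma ratio_aux (m : ℕ) (b : ℕ → ℝ)
    (hb_pos : ∀ i, 1 ≤ i → i ≤ m → 0 < b i)
    (hb_lc : ∀ i, 2 ≤ i → i ≤ m - 1 → b (i - 1) * b (i + 1) ≤ (b i) ^ 2) :
    ∀ α β, 1 ≤ α → α ≤ β → β + 1 ≤ m → b α * b (β+1) ≤ b β * b (α+1) := by
  intro α β hα hαβ
  induction β, hαβ using Nat.le_induction with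
  | base => intro _; exact le_refl _
  | succ β hβ ih =>
    intro hβ2
    have ih' := ih (by omega)
    have hlc := hb_lc (β+1) (by omega) (by omega)
    have e : β + 1 - 1 = β := by omega
    rw [e] at hlc
    have p1 := hb_pos α (by omega) (by omega)
    have p2 := hb_pos (α+1) (by omega) (by omega)
    have p3 := hb_pos β (by omega) (by omega)
    have p4 := hb_pos (β+1) (by omega) (by omega)
    have p5 := hb_pos (β+2) (by omega) (by omega)
    have h1 : b α * b (β+1) * b (β+2) ≤ b β * b (α+1) * b (β+2) :=
      mul_le_mul_of_nonneg_right ih' p5.le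
    have h2 : b β * b (β+2) * b (α+1) ≤ (b (β+1))^2 * b (α+1) :=
      mul_le_mul_of_nonneg_right hlc p2.le
    have key : b α * b (β+2) * b (β+1) ≤ b (β+1) * b (α+1) * b (β+1) := by nlinarith
    have := le_of_mul_le_mul_right (by linarith [key] : b α * b (β+1+1) * b (β+1) ≤ b (β+1) * b (α+1) * b (β+1)) p4
    linarith

lemma pow_coeff_zero (g : Polynomial ℝ) (i : ℕ) : (g ^ i).coeff 0 = (g.coeff 0) ^ i := by
  induction i with
  | zero => simp
  | succ i ih => rw [pow_succ, Polynomial.mul_coeff_zero, ih, pow_succ]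

lemma pow_coeff_nonneg (g : Polynomial ℝ) (hg : ∀ k, 0 ≤ g.coeff k) (i : ℕ) :
    ∀ k, 0 ≤ (g ^ i).coeff k := by
  induction i with
  | zero =>
    intro k
    rcases Nat.eq_zero_or_pos k with rfl | hk
    · simp
    · simp [Polynomial.coeff_one, Nat.pos_iff_ne_zero.mp hk]
  | succ i ih =>
    intro k
    rw [pow_succ, Polynomial.coeff_mul]
    exact Finset.sum_nonneg fun x _ => mul_nonneg (ih _) (hg _)

lemma main_aux (m : ℕ) (hm : 1 ≤ m) (b : ℕ → ℝ)
    (hb_pos : ∀ i, 1 ≤ i → i ≤ m → 0 < b i)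
    (hratio : ∀ α β, 1 ≤ α → α ≤ β → β + 1 ≤ m → b α * b (β+1) ≤ b β * b (α+1))
    (g : Polynomial ℝ) (hgc : ∀ j, g.coeff j = if 1 ≤ j ∧ j ≤ m then b j else 0) :
    ∀ (n : ℕ) (a : ℕ → ℝ), (∀ i, i ≤ n → 0 < a i) → (∀ i, 1 ≤ i → i ≤ n → a (i-1) ≤ b 1 * a i) →
    PolyUnimodal (∑ i ∈ range (n+1), C (a i) * g ^ i) := by
  have hg0 : g.coeff 0 = 0 := by rw [hgc]; simp
  have hg_nonneg : ∀ k, 0 ≤ g.coeff k := by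
    intro k
    rw [hgc]
    split
    · next h => exact (hb_pos k h.1 h.2).le
    · exact le_refl 0
  intro n
  induction n with
  | zero =>
    intro a ha _
    refine ⟨0, fun i hi => absurd hi (Nat.not_lt_zero i), fun i _ => ?_⟩
    have e : ∑ i ∈ range 1, C (a i) * g ^ i = C (a 0) := by simp
    rw [e, Polynomial.coeff_C, Polynomial.coeff_C, if_neg (Nat.succ_ne_zero i)]
    split
    · exact (ha 0 le_rfl).le
    · exact le_rfl
  | succ n ih =>
    intro a ha hk
    set a' : ℕ → ℝ := fun i => a (i+1) with ha'
    set H : Polynomial ℝ := ∑ i ∈ range (n+1), C (a' i) * g ^ i with hHdef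
    obtain ⟨M, hMinc, hMdec⟩ : PolyUnimodal H := by
      apply ih a' (fun i hi => ha (i+1) (by omega))
      intro i h1 h2
      have := hk (i+1) (by omega) (by omega)
      have e : i + 1 - 1 = i := by omega
      rw [e] at this
      have e2 : i - 1 + 1 = i := by omega
      show a (i - 1 + 1) ≤ b 1 * a (i + 1)
      rw [e2]
      exact this
    have hH_nonneg : ∀ k, 0 ≤ H.coeff k := by
      intro k
      rw [hHdef, Polynomial.finset_sum_coeff]
      apply Finset.sum_nonneg
      intro i hi
      simp only [Finset.mem_range] at hi
      rw [Polynomial.coeff_C_mul]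
      exact mul_nonneg (ha (i+1) (by omega)).le (pow_coeff_nonneg g hg_nonneg i k)
    obtain ⟨Mw, hwinc, hwdec⟩ := conv_unimodal g.coeff H.coeff
      (g * H).coeff m hm hg0
      (fun j h1 h2 => by rw [hgc, if_pos ⟨h1, h2⟩]; exact hb_pos j h1 h2)
      (fun j hj => by rw [hgc, if_neg (by omega)])
      (fun α β h1 h2 h3 => by
        have c1 : g.coeff α = b α := by rw [hgc, if_pos ⟨h1, by omega⟩]
        have c2 : g.coeff (β+1) = b (β+1) := by rw [hgc, if_pos ⟨by omega, by omega⟩]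
        have c3 : g.coeff β = b β := by rw [hgc, if_pos ⟨by omega, by omega⟩]
        have c4 : g.coeff (α+1) = b (α+1) := by rw [hgc, if_pos ⟨by omega, by omega⟩]
        rw [c1, c2, c3, c4]
        exact hratio α β h1 h2 h3)
      hH_nonneg M hMinc hMdec
      (fun k => by rw [Polynomial.coeff_mul, Finset.Nat.sum_antidiagonal_eq_sum_range_succ_mk])
    have hH0 : H.coeff 0 = a 1 := by
      rw [hHdef, Polynomial.finset_sum_coeff]
      rw [Finset.sum_range_succ' (fun i => (C (a' i) * g ^ i).coeff 0) n]
      have hzero : ∀ i ∈ range n, (C (a' (i+1)) * g ^ (i+1)).coeff 0 = 0 := by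
        intro i _
        rw [Polynomial.coeff_C_mul, pow_coeff_zero, hg0, zero_pow (by omega), mul_zero]
      rw [Finset.sum_congr rfl hzero]
      simp [ha']
    have hw0 : (g * H).coeff 0 = 0 := by rw [Polynomial.mul_coeff_zero, hg0, zero_mul]
    have hw1 : (g * H).coeff 1 = b 1 * a 1 := by
      rw [Polynomial.coeff_mul, Finset.Nat.sum_antidiagonal_eq_sum_range_succ_mk]
      rw [Finset.sum_range_succ, Finset.sum_range_one]
      rw [hg0, hH0]
      have : g.coeff 1 = b 1 := by rw [hgc]; simp [hm]
      rw [this]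
      ring
    have decomp : ∑ i ∈ range (n+2), C (a i) * g ^ i = C (a 0) + g * H := by
      rw [Finset.sum_range_succ' (fun i => C (a i) * g ^ i) (n+1)]
      rw [pow_zero, mul_one]
      have : ∑ i ∈ range (n+1), C (a (i+1)) * g ^ (i+1) = g * H := by
        rw [hHdef, Finset.mul_sum]
        apply Finset.sum_congr rfl
        intro i _
        simp only [ha']
        ring
      rw [this, add_comm]
    rw [decomp]
    refine ⟨max Mw 1, ?_, ?_⟩
    · intro i hi
      rcases Nat.eq_zero_or_pos i with rfl | hipos
      · have hkey := hk 1 (by omega) (by omega)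
        norm_num at hkey
        simp only [Polynomial.coeff_add, Polynomial.coeff_C]
        rw [hw0, hw1]
        norm_num
        linarith
      · have hiMw : i < Mw := by
          rcases lt_max_iff.mp hi with h | h
          · exact h
          · omega
        have hne : i ≠ 0 := by omega
        simp only [Polynomial.coeff_add, Polynomial.coeff_C, if_neg hne,
          if_neg (by omega : ¬ i + 1 = 0), zero_add]
        exact hwinc i hiMw
    · intro i hi
      have h1 : 1 ≤ i := le_trans (le_max_right Mw 1) hi
      have h2 : Mw ≤ i := le_trans (le_max_left _ _) hi
      simp only [Polynomial.coeff_add, Polynomial.coeff_C, if_neg (by omega : ¬ i = 0),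
        if_neg (by omega : ¬ i + 1 = 0), zero_add]
      exact hwdec i h2

theorem stmt1 (n m : ℕ) (a b : ℕ → ℝ)
    (ha_pos : ∀ i ≤ n, 0 < a i)
    (hb_pos : ∀ i, 1 ≤ i → i ≤ m → 0 < b i)
    (hm : 1 ≤ m)
    (hb_lc : ∀ i, 2 ≤ i → i ≤ m - 1 → b (i - 1) * b (i + 1) ≤ (b i) ^ 2)
    (hkey : ∀ i, 1 ≤ i → i ≤ n → a (i - 1) ≤ b 1 * a i)
    (f g : Polynomial ℝ)
    (hf : f = ∑ i ∈ Finset.range (n + 1), C (a i) * X ^ i)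
    (hg : g = ∑ i ∈ Finset.Icc 1 m, C (b i) * X ^ i) :
    PolyUnimodal (f.comp g) := by
  have hgc : ∀ j, g.coeff j = if 1 ≤ j ∧ j ≤ m then b j else 0 := by
    intro j
    rw [hg, Polynomial.finset_sum_coeff]
    simp [Polynomial.coeff_C_mul, Polynomial.coeff_X_pow, Finset.mem_Icc]
  have hcomp : f.comp g = ∑ i ∈ Finset.range (n + 1), C (a i) * g ^ i := by
    rw [hf]
    simp [Polynomial.comp, Polynomial.eval₂_finset_sum]
  rw [hcomp]
  exact main_aux m hm b hb_pos (ratio_aux m b hb_pos hb_lc) g hgc n a ha_pos hkey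
end

section
/- If f(x) and g(x) are polynomials with positive coefficients and both have log-concave coefficient sequences, then the product f(x)g(x) has a log-concave coefficient sequence. -/
/-!
Write `a`, `b`, `c` for the coefficients of `f`, `g`, `f * g`. Log-concavity without internal
zeros makes `a (i + 1) / a i` decreasing, so every minor `a (i - 1) * a j - a (j - 1) * a i` with
`i ≤ j` is nonpositive (`a (i - 1)` is read as the coefficient of `X * f`, so `a (-1) = 0`).
The matrix `[[c k, c (k - 1)], [c (k + 1), c k]]` is the product of the `2 × (k + 2)` matrices with
rows `a (i - 1), a i` and `b (k + 1 - i), b (k - i)`, and the Cauchy–Binet formula writes its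
determinant as a sum of products of two such minors, both nonpositive.
-/

open Polynomial

namespace Finset

variable {ι R : Type*} (s : Finset ι) (x x' y y' : ι → R)

theorem two_mul_sum_mul_sum_sub_eq_sum_sum_minors [CommRing R] :
    2 * ((∑ i ∈ s, x i * y i) * (∑ i ∈ s, x' i * y' i)
      - (∑ i ∈ s, x i * y' i) * (∑ i ∈ s, x' i * y i)) =
    ∑ i ∈ s, ∑ j ∈ s, (x i * x' j - x j * x' i) * (y i * y' j - y j * y' i) := by
  set H : ι → ι → R := fun i j => x i * y i * (x' j * y' j) - x i * y' i * (x' j * y j)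
  have hH : ∑ i ∈ s, ∑ j ∈ s, H i j =
      (∑ i ∈ s, x i * y i) * (∑ i ∈ s, x' i * y' i)
        - (∑ i ∈ s, x i * y' i) * (∑ i ∈ s, x' i * y i) := by
    simp only [H, sum_mul_sum, ← sum_sub_distrib]
  calc 2 * ((∑ i ∈ s, x i * y i) * (∑ i ∈ s, x' i * y' i)
        - (∑ i ∈ s, x i * y' i) * (∑ i ∈ s, x' i * y i))
      = ∑ i ∈ s, ∑ j ∈ s, H i j + ∑ i ∈ s, ∑ j ∈ s, H j i := by
        rw [← hH, two_mul]
        congr 1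
        exact sum_comm
    _ = ∑ i ∈ s, ∑ j ∈ s, (x i * x' j - x j * x' i) * (y i * y' j - y j * y' i) := by
      simp only [← sum_add_distrib]
      exact sum_congr rfl fun i _ => sum_congr rfl fun j _ => by ring

theorem sum_mul_sum_le_sum_mul_sum_of_minors_mul_nonneg
    [CommRing R] [LinearOrder R] [IsStrictOrderedRing R]
    (h : ∀ i ∈ s, ∀ j ∈ s, 0 ≤ (x i * x' j - x j * x' i) * (y i * y' j - y j * y' i)) :
    (∑ i ∈ s, x i * y' i) * (∑ i ∈ s, x' i * y i) ≤
      (∑ i ∈ s, x i * y i) * (∑ i ∈ s, x' i * y' i) := by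
  have h2 := two_mul_sum_mul_sum_sub_eq_sum_sum_minors s x x' y y'
  have : 0 ≤ ∑ i ∈ s, ∑ j ∈ s, (x i * x' j - x j * x' i) * (y i * y' j - y j * y' i) :=
    sum_nonneg fun i hi => sum_nonneg fun j hj => h i hi j hj
  linarith

end Finset

namespace Polynomial

theorem coeff_nonneg_of_pos_of_le_natDegree {R : Type*} [Semiring R] [PartialOrder R]
    {p : R[X]} (hpos : ∀ i ≤ p.natDegree, 0 < p.coeff i) (n : ℕ) : 0 ≤ p.coeff n := by
  rcases le_or_gt n p.natDegree with hn | hn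
  · exact (hpos n hn).le
  · rw [coeff_eq_zero_of_natDegree_lt hn]

end Polynomial

namespace PolyLogConcave

variable {p : ℝ[X]} (hpos : ∀ i ≤ p.natDegree, 0 < p.coeff i) (hp : PolyLogConcave p)
include hpos hp

theorem coeff_mul_coeff_succ_le {i j : ℕ} (hij : i ≤ j) :
    p.coeff i * p.coeff (j + 1) ≤ p.coeff (i + 1) * p.coeff j := by
  have hnn := coeff_nonneg_of_pos_of_le_natDegree hpos
  induction j, hij using Nat.le_induction with
  | base => rw [mul_comm]
  | succ j _ ih =>
    rcases le_or_gt (j + 1) p.natDegree with hj | hj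
    · have hlc : p.coeff j * p.coeff (j + 2) ≤ p.coeff (j + 1) ^ 2 := by
        simpa using hp (j + 1) j.succ_pos
      refine le_of_mul_le_mul_right ?_ (hpos (j + 1) hj)
      calc p.coeff i * p.coeff (j + 2) * p.coeff (j + 1)
          = p.coeff i * p.coeff (j + 1) * p.coeff (j + 2) := by ring
        _ ≤ p.coeff (i + 1) * p.coeff j * p.coeff (j + 2) :=
          mul_le_mul_of_nonneg_right ih (hnn _)
        _ = p.coeff (i + 1) * (p.coeff j * p.coeff (j + 2)) := by ring
        _ ≤ p.coeff (i + 1) * p.coeff (j + 1) ^ 2 := mul_le_mul_of_nonneg_left hlc (hnn _)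
        _ = p.coeff (i + 1) * p.coeff (j + 1) * p.coeff (j + 1) := by ring
    · rw [coeff_eq_zero_of_natDegree_lt (by omega : p.natDegree < j + 1 + 1), mul_zero]
      exact mul_nonneg (hnn _) (hnn _)

theorem coeff_X_mul_mul_coeff_le {i j : ℕ} (hij : i ≤ j) :
    (X * p).coeff i * p.coeff j ≤ (X * p).coeff j * p.coeff i := by
  obtain _ | i := i
  · have hnn := coeff_nonneg_of_pos_of_le_natDegree hpos
    rw [coeff_X_mul_zero, zero_mul]
    obtain _ | j := j
    · rw [coeff_X_mul_zero, zero_mul]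
    · rw [coeff_X_mul]
      exact mul_nonneg (hnn j) (hnn 0)
  · obtain ⟨j, rfl⟩ := Nat.exists_eq_add_of_le' (Nat.succ_pos i |>.trans_le hij)
    rw [coeff_X_mul, coeff_X_mul, mul_comm (p.coeff j)]
    exact coeff_mul_coeff_succ_le hpos hp (by omega)

end PolyLogConcave

open Finset

theorem stmt2 (f g : Polynomial ℝ)
    (hf_pos : ∀ i ≤ f.natDegree, 0 < f.coeff i)
    (hg_pos : ∀ i ≤ g.natDegree, 0 < g.coeff i)
    (hf : PolyLogConcave f) (hg : PolyLogConcave g) :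
    PolyLogConcave (f * g) := by
  intro k hk
  obtain ⟨n, rfl⟩ := Nat.exists_eq_add_of_le' hk
  have hminors : ∀ u ∈ antidiagonal (n + 2), ∀ v ∈ antidiagonal (n + 2),
      0 ≤ ((X * f).coeff u.1 * f.coeff v.1 - (X * f).coeff v.1 * f.coeff u.1) *
        (g.coeff u.2 * (X * g).coeff v.2 - g.coeff v.2 * (X * g).coeff u.2) := by
    intro u hu v hv
    rw [HasAntidiagonal.mem_antidiagonal] at hu hv
    rcases le_total u.1 v.1 with huv | hvu
    · have hg_minor := hg.coeff_X_mul_mul_coeff_le hg_pos (show v.2 ≤ u.2 by omega)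
      exact mul_nonneg_of_nonpos_of_nonpos
        (sub_nonpos.2 (hf.coeff_X_mul_mul_coeff_le hf_pos huv))
        (sub_nonpos.2 (by linarith))
    · have hg_minor := hg.coeff_X_mul_mul_coeff_le hg_pos (show u.2 ≤ v.2 by omega)
      exact mul_nonneg
        (sub_nonneg.2 (hf.coeff_X_mul_mul_coeff_le hf_pos hvu))
        (sub_nonneg.2 (by linarith))
  have key := sum_mul_sum_le_sum_mul_sum_of_minors_mul_nonneg _ _ _ _ _ hminors
  simp only [← coeff_mul] at key
  rw [show X * f * (X * g) = X * (X * (f * g)) by ring, show X * f * g = X * (f * g) by ring,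
    show f * (X * g) = X * (f * g) by ring, coeff_X_mul, coeff_X_mul, coeff_X_mul, ← sq] at key
  exact key
end

section
/- If f(x) is a polynomial with positive, log-concave coefficient sequence and g(x) is a polynomial with positive, unimodal coefficient sequence, then the product f(x)g(x) has a unimodal coefficient sequence. -/
open Polynomial Finset

noncomputable def Aa (f : Polynomial ℝ) (j : ℤ) : ℝ := if 0 ≤ j then f.coeff j.toNat else 0

lemma Aa_nonneg (f : Polynomial ℝ) (hf_pos : ∀ i ≤ f.natDegree, 0 < f.coeff i) (j : ℤ) :
    0 ≤ Aa f j := by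
  unfold Aa
  split
  · rcases le_or_gt j.toNat f.natDegree with h | h
    · exact (hf_pos _ h).le
    · simp [f.coeff_eq_zero_of_natDegree_lt h]
  · exact le_refl 0

lemma Aa_eq_zero_iff (f : Polynomial ℝ) (hf_pos : ∀ i ≤ f.natDegree, 0 < f.coeff i) (j : ℤ) :
    Aa f j = 0 ↔ (j < 0 ∨ (f.natDegree : ℤ) < j) := by
  unfold Aa
  split
  case isTrue h =>
    rcases le_or_gt j.toNat f.natDegree with h2 | h2
    · constructor
      · intro hz
        exact absurd hz (ne_of_gt (hf_pos _ h2))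
      · intro hc
        omega
    · constructor
      · intro _; right; omega
      · intro _; exact f.coeff_eq_zero_of_natDegree_lt h2
  case isFalse h =>
    constructor
    · intro _; left; omega
    · intro _; rfl

lemma Aa_lc (f : Polynomial ℝ) (hf : ∀ k : ℕ, 1 ≤ k →
      f.coeff (k - 1) * f.coeff (k + 1) ≤ (f.coeff k) ^ 2) (j : ℤ) :
    Aa f (j - 1) * Aa f (j + 1) ≤ Aa f j ^ 2 := by
  rcases le_or_gt j 0 with h | h
  · have h1 : Aa f (j - 1) = 0 := by unfold Aa; rw [if_neg]; omega
    rw [h1, zero_mul]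
    positivity
  · lift j to ℕ using h.le with k
    have hk : 1 ≤ k := by exact_mod_cast h
    have e1 : ((k : ℤ) - 1).toNat = k - 1 := by omega
    have e2 : ((k : ℤ) + 1).toNat = k + 1 := by omega
    have e3 : ((k : ℤ)).toNat = k := by omega
    unfold Aa
    rw [if_pos (by omega), if_pos (by omega), if_pos (by omega), e1, e2, e3]
    exact hf k hk

lemma Aa_ratio (f : Polynomial ℝ) (hf_pos : ∀ i ≤ f.natDegree, 0 < f.coeff i)
    (hf : ∀ k : ℕ, 1 ≤ k → f.coeff (k - 1) * f.coeff (k + 1) ≤ (f.coeff k) ^ 2) :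
    ∀ t : ℕ, ∀ i : ℤ, Aa f i * Aa f (i + t + 1) ≤ Aa f (i + 1) * Aa f (i + t) := by
  intro t
  induction t with
  | zero => intro i; simp [mul_comm]
  | succ t ih =>
    intro i
    have harg1 : i + ((t : ℤ) + 1) + 1 = (i + t + 1) + 1 := by ring
    have harg2 : i + ((t : ℤ) + 1) = (i + t) + 1 := by ring
    push_cast
    rw [harg1, harg2]
    set x := Aa f i with hx
    set y := Aa f (i + 1) with hy
    set u := Aa f (i + t) with hu
    set v := Aa f (i + t + 1) with hv
    set w := Aa f (i + t + 1 + 1) with hw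
    have hxn : 0 ≤ x := Aa_nonneg f hf_pos _
    have hyn : 0 ≤ y := Aa_nonneg f hf_pos _
    have hwn : 0 ≤ w := Aa_nonneg f hf_pos _
    have hvn : 0 ≤ v := Aa_nonneg f hf_pos _
    have hih : x * v ≤ y * u := ih i
    have hlc : u * w ≤ v ^ 2 := by
      have := Aa_lc f hf (i + t + 1)
      have e1 : i + t + 1 - 1 = i + t := by ring
      rw [e1] at this
      exact this
    rcases eq_or_lt_of_le hvn with hz | hpos
    · -- v = 0
      have hz' := (Aa_eq_zero_iff f hf_pos (i + t + 1)).1 hz.symm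
      have hxw : x * w = 0 := by
        rcases hz' with h | h
        · have : x = 0 := (Aa_eq_zero_iff f hf_pos i).2 (by left; omega)
          rw [this, zero_mul]
        · have : w = 0 := (Aa_eq_zero_iff f hf_pos _).2 (by right; omega)
          rw [this, mul_zero]
      rw [hxw]
      exact mul_nonneg hyn hvn
    · have key : (x * w) * v ≤ (y * v) * v := by
        calc (x * w) * v = (x * v) * w := by ring
          _ ≤ (y * u) * w := mul_le_mul_of_nonneg_right hih hwn
          _ = y * (u * w) := by ring
          _ ≤ y * v ^ 2 := mul_le_mul_of_nonneg_left hlc hyn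
          _ = (y * v) * v := by ring
      exact le_of_mul_le_mul_right key hpos

noncomputable def Dd (g : Polynomial ℝ) : ℕ → ℝ
  | 0 => g.coeff 0
  | (k+1) => g.coeff (k+1) - g.coeff k

lemma coeff_mul_eq (f g : Polynomial ℝ) (n : ℕ) :
    (f * g).coeff n = ∑ k ∈ Finset.range (n+1), g.coeff k * Aa f ((n:ℤ) - k) := by
  rw [mul_comm, Polynomial.coeff_mul, Finset.Nat.sum_antidiagonal_eq_sum_range_succ_mk]
  apply Finset.sum_congr rfl
  intro k hk
  have hkn : k ≤ n := by simpa [Nat.lt_succ_iff] using hk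
  congr 1
  unfold Aa
  rw [if_pos (by omega)]
  congr 1
  omega

lemma delta_eq (f g : Polynomial ℝ) (n : ℕ) :
    (f * g).coeff (n+1) - (f * g).coeff n
      = ∑ k ∈ Finset.range (n+2), Dd g k * Aa f ((n:ℤ) + 1 - k) := by
  have split : ∀ k, Dd g k * Aa f ((n:ℤ) + 1 - k)
      = g.coeff k * Aa f ((n:ℤ) + 1 - k)
        - (if k = 0 then (0:ℝ) else g.coeff (k-1) * Aa f ((n:ℤ) + 1 - k)) := by
    intro k
    cases k with
    | zero => simp [Dd]
    | succ k => simp [Dd]; ring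
  rw [Finset.sum_congr rfl (fun k _ => split k), Finset.sum_sub_distrib]
  have h1 : ∑ k ∈ Finset.range (n+2), g.coeff k * Aa f ((n:ℤ) + 1 - k)
      = (f * g).coeff (n+1) := by
    rw [coeff_mul_eq]
    refine Finset.sum_congr rfl fun k _ => ?_
    norm_cast
  have h2 : ∑ k ∈ Finset.range (n+2),
      (if k = 0 then (0:ℝ) else g.coeff (k-1) * Aa f ((n:ℤ) + 1 - k))
      = (f * g).coeff n := by
    rw [Finset.sum_range_succ']
    simp only [Nat.succ_ne_zero, if_false, if_true, add_zero, Nat.add_sub_cancel, reduceIte]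
    rw [coeff_mul_eq]
    refine Finset.sum_congr rfl fun k _ => ?_
    congr 2
    push_cast; ring
  rw [h1, h2]

lemma Dd_zero (g : Polynomial ℝ) (k : ℕ) (hk : g.natDegree + 2 ≤ k) : Dd g k = 0 := by
  match k, hk with
  | (k+1), hk =>
    have h1 : g.coeff (k+1) = 0 := g.coeff_eq_zero_of_natDegree_lt (by omega)
    have h2 : g.coeff k = 0 := g.coeff_eq_zero_of_natDegree_lt (by omega)
    simp [Dd, h1, h2]

lemma delta_fixed (f g : Polynomial ℝ) (n : ℕ) :
    (f * g).coeff (n+1) - (f * g).coeff n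
      = ∑ k ∈ Finset.range (g.natDegree + 2), Dd g k * Aa f ((n:ℤ) + 1 - k) := by
  rw [delta_eq]
  have hN1 : Finset.range (n+2) ⊆ Finset.range (n + g.natDegree + 2) :=
    Finset.range_subset_range.2 (by omega)
  have hN2 : Finset.range (g.natDegree + 2) ⊆ Finset.range (n + g.natDegree + 2) :=
    Finset.range_subset_range.2 (by omega)
  rw [Finset.sum_subset hN1, Finset.sum_subset hN2]
  · intro k hk hk2
    simp only [Finset.mem_range] at hk hk2
    rw [Dd_zero g k (by omega), zero_mul]
  · intro k hk hk2
    simp only [Finset.mem_range] at hk hk2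
    have : Aa f ((n:ℤ) + 1 - k) = 0 := by
      unfold Aa; rw [if_neg]; omega
    rw [this, mul_zero]

noncomputable def Pp (f g : Polynomial ℝ) (m n : ℕ) : ℝ :=
  ∑ k ∈ Finset.range (m+1), Dd g k * Aa f ((n:ℤ) + 1 - k)

noncomputable def Nc (f g : Polynomial ℝ) (m n : ℕ) : ℝ :=
  ∑ k ∈ Finset.Ico (m+1) (g.natDegree + 2), (-(Dd g k)) * Aa f ((n:ℤ) + 1 - k)

lemma delta_split (f g : Polynomial ℝ) (m : ℕ) (hm : m ≤ g.natDegree) (n : ℕ) :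
    (f * g).coeff (n+1) - (f * g).coeff n = Pp f g m n - Nc f g m n := by
  rw [delta_fixed]
  unfold Pp Nc
  rw [Finset.range_eq_Ico,
    ← Finset.sum_Ico_consecutive (fun k => Dd g k * Aa f ((n:ℤ) + 1 - k))
      (Nat.zero_le (m+1)) (by omega : m + 1 ≤ g.natDegree + 2),
    ← Finset.range_eq_Ico]
  have : ∑ k ∈ Finset.Ico (m+1) (g.natDegree + 2), (-(Dd g k)) * Aa f ((n:ℤ) + 1 - k)
      = - ∑ k ∈ Finset.Ico (m+1) (g.natDegree + 2), Dd g k * Aa f ((n:ℤ) + 1 - k) := by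
    rw [← Finset.sum_neg_distrib]
    exact Finset.sum_congr rfl fun k _ => by ring
  rw [this]
  ring

lemma Pp_nonneg (f g : Polynomial ℝ) (m n : ℕ)
    (hf_pos : ∀ i ≤ f.natDegree, 0 < f.coeff i)
    (hd1 : ∀ k ≤ m, 0 ≤ Dd g k) : 0 ≤ Pp f g m n :=
  Finset.sum_nonneg fun k hk =>
    mul_nonneg (hd1 k (by simpa [Nat.lt_succ_iff] using hk)) (Aa_nonneg f hf_pos _)

lemma Nc_nonneg (f g : Polynomial ℝ) (m n : ℕ)
    (hf_pos : ∀ i ≤ f.natDegree, 0 < f.coeff i)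
    (hd2 : ∀ k, m < k → Dd g k ≤ 0) : 0 ≤ Nc f g m n :=
  Finset.sum_nonneg fun k hk =>
    mul_nonneg (by have := hd2 k (by exact (Finset.mem_Ico.1 hk).1); linarith)
      (Aa_nonneg f hf_pos _)

lemma cross (f g : Polynomial ℝ) (m : ℕ)
    (hf_pos : ∀ i ≤ f.natDegree, 0 < f.coeff i)
    (hf : ∀ k : ℕ, 1 ≤ k → f.coeff (k - 1) * f.coeff (k + 1) ≤ (f.coeff k) ^ 2)
    (hd1 : ∀ k ≤ m, 0 ≤ Dd g k) (hd2 : ∀ k, m < k → Dd g k ≤ 0) (n : ℕ) :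
    Pp f g m (n+1) * Nc f g m n ≤ Pp f g m n * Nc f g m (n+1) := by
  unfold Pp Nc
  rw [Finset.sum_mul_sum, Finset.sum_mul_sum]
  apply Finset.sum_le_sum
  intro k hk
  apply Finset.sum_le_sum
  intro l hl
  have hkm : k ≤ m := by simpa [Nat.lt_succ_iff] using hk
  have hlm : m < l := (Finset.mem_Ico.1 hl).1
  have hkl : k < l := lt_of_le_of_lt hkm hlm
  have hr := Aa_ratio f hf_pos hf (l - k) ((n:ℤ) + 1 - l)
  have e0 : ((l - k : ℕ) : ℤ) = (l : ℤ) - k := by omega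
  rw [e0] at hr
  have e1 : (n:ℤ) + 1 - l + ((l:ℤ) - k) + 1 = ((n+1:ℕ):ℤ) + 1 - k := by push_cast; ring
  have e2 : (n:ℤ) + 1 - l + 1 = ((n+1:ℕ):ℤ) + 1 - l := by push_cast; ring
  have e3 : (n:ℤ) + 1 - l + ((l:ℤ) - k) = (n:ℤ) + 1 - k := by ring
  rw [e1, e2, e3] at hr
  have hc : 0 ≤ Dd g k * (-(Dd g l)) :=
    mul_nonneg (hd1 k hkm) (by have := hd2 l hlm; linarith)
  calc Dd g k * Aa f (((n+1:ℕ):ℤ) + 1 - k) * ((-(Dd g l)) * Aa f ((n:ℤ) + 1 - l))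
      = (Dd g k * (-(Dd g l))) * (Aa f ((n:ℤ) + 1 - l) * Aa f (((n+1:ℕ):ℤ) + 1 - k)) := by
        ring
    _ ≤ (Dd g k * (-(Dd g l))) * (Aa f (((n+1:ℕ):ℤ) + 1 - l) * Aa f ((n:ℤ) + 1 - k)) :=
        mul_le_mul_of_nonneg_left hr hc
    _ = Dd g k * Aa f ((n:ℤ) + 1 - k) * ((-(Dd g l)) * Aa f (((n+1:ℕ):ℤ) + 1 - l)) := by
        ring

lemma step (f g : Polynomial ℝ) (m : ℕ)
    (hf_pos : ∀ i ≤ f.natDegree, 0 < f.coeff i)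
    (hf : ∀ k : ℕ, 1 ≤ k → f.coeff (k - 1) * f.coeff (k + 1) ≤ (f.coeff k) ^ 2)
    (hd1 : ∀ k ≤ m, 0 ≤ Dd g k) (hd2 : ∀ k, m < k → Dd g k ≤ 0) (n : ℕ)
    (h1 : Pp f g m n ≤ Nc f g m n)
    (h2 : Nc f g m n = 0 → f.natDegree + m ≤ n) :
    Pp f g m (n+1) ≤ Nc f g m (n+1) ∧
      (Nc f g m (n+1) = 0 → f.natDegree + m ≤ n+1) := by
  have hNnn : 0 ≤ Nc f g m n := Nc_nonneg f g m n hf_pos hd2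
  have hNn1 : 0 ≤ Nc f g m (n+1) := Nc_nonneg f g m (n+1) hf_pos hd2
  have tnonneg : ∀ (n' : ℕ) (k : ℕ), k ∈ Finset.Ico (m+1) (g.natDegree + 2) →
      0 ≤ (-(Dd g k)) * Aa f ((n' : ℤ) + 1 - k) := fun n' k hk =>
    mul_nonneg (by have := hd2 k (Finset.mem_Ico.1 hk).1; linarith) (Aa_nonneg f hf_pos _)
  have pnonneg : ∀ (n' : ℕ) (k : ℕ), k ∈ Finset.range (m+1) →
      0 ≤ Dd g k * Aa f ((n' : ℤ) + 1 - k) := fun n' k hk =>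
    mul_nonneg (hd1 k (by simpa [Nat.lt_succ_iff] using hk)) (Aa_nonneg f hf_pos _)
  rcases eq_or_lt_of_le hNnn with hz | hpos
  · -- Nc n = 0
    have hdm : f.natDegree + m ≤ n := h2 hz.symm
    have hP0 : Pp f g m n = 0 :=
      le_antisymm (h1.trans_eq hz.symm) (Pp_nonneg f g m n hf_pos hd1)
    have hall := (Finset.sum_eq_zero_iff_of_nonneg (fun k hk => pnonneg n k hk)).1 hP0
    have hP1 : Pp f g m (n+1) = 0 := by
      apply Finset.sum_eq_zero
      intro k hk
      have hkm : k ≤ m := by simpa [Nat.lt_succ_iff] using hk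
      rcases mul_eq_zero.1 (hall k hk) with hD | hA
      · rw [hD, zero_mul]
      · have := (Aa_eq_zero_iff f hf_pos _).1 hA
        have : Aa f (((n+1:ℕ):ℤ) + 1 - k) = 0 := by
          apply (Aa_eq_zero_iff f hf_pos _).2
          right
          push_cast at this ⊢
          omega
        rw [this, mul_zero]
    constructor
    · rw [hP1]; exact hNn1
    · intro _; omega
  · -- 0 < Nc n
    constructor
    · have hcr := cross f g m hf_pos hf hd1 hd2 n
      have h3 : Pp f g m n * Nc f g m (n+1) ≤ Nc f g m n * Nc f g m (n+1) :=
        mul_le_mul_of_nonneg_right h1 hNn1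
      have key : Pp f g m (n+1) * Nc f g m n ≤ Nc f g m (n+1) * Nc f g m n := by
        calc Pp f g m (n+1) * Nc f g m n ≤ Pp f g m n * Nc f g m (n+1) := hcr
          _ ≤ Nc f g m n * Nc f g m (n+1) := h3
          _ = Nc f g m (n+1) * Nc f g m n := by ring
      exact le_of_mul_le_mul_right key hpos
    · intro hN1z
      have hpos' : (∑ k ∈ Finset.Ico (m+1) (g.natDegree + 2),
          (-(Dd g k)) * Aa f ((n:ℤ) + 1 - k)) ≠ 0 := ne_of_gt hpos
      obtain ⟨k0, hk0mem, hk0ne⟩ := Finset.exists_ne_zero_of_sum_ne_zero hpos'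
      have hDne : -(Dd g k0) ≠ 0 := fun h => hk0ne (by rw [h, zero_mul])
      have hAne : Aa f ((n:ℤ) + 1 - k0) ≠ 0 := fun h => hk0ne (by rw [h, mul_zero])
      have hA1 : (-(Dd g k0)) * Aa f (((n+1:ℕ):ℤ) + 1 - k0) = 0 :=
        (Finset.sum_eq_zero_iff_of_nonneg (fun k hk => tnonneg (n+1) k hk)).1 hN1z k0 hk0mem
      have hA1z : Aa f (((n+1:ℕ):ℤ) + 1 - k0) = 0 := by
        rcases mul_eq_zero.1 hA1 with h | h
        · exact absurd h hDne
        · exact h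
      have hb1 : ¬ ((n:ℤ) + 1 - k0 < 0 ∨ (f.natDegree : ℤ) < (n:ℤ) + 1 - k0) :=
        fun h => hAne ((Aa_eq_zero_iff f hf_pos _).2 h)
      have hb2 := (Aa_eq_zero_iff f hf_pos _).1 hA1z
      have hk0m : m + 1 ≤ k0 := (Finset.mem_Ico.1 hk0mem).1
      push_cast at hb1 hb2
      omega

theorem stmt3' (f g : Polynomial ℝ)
    (hf_pos : ∀ i ≤ f.natDegree, 0 < f.coeff i)
    (hg_pos : ∀ i ≤ g.natDegree, 0 < g.coeff i)
    (hf : ∀ k : ℕ, 1 ≤ k → f.coeff (k - 1) * f.coeff (k + 1) ≤ (f.coeff k) ^ 2)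
    (hg : ∃ m : ℕ, (∀ i, i < m → g.coeff i ≤ g.coeff (i + 1)) ∧
      (∀ i, m ≤ i → g.coeff (i + 1) ≤ g.coeff i)) :
    ∃ m : ℕ, (∀ i, i < m → (f*g).coeff i ≤ (f*g).coeff (i + 1)) ∧
      (∀ i, m ≤ i → (f*g).coeff (i + 1) ≤ (f*g).coeff i) := by
  classical
  obtain ⟨m, hm1, hm2⟩ := hg
  -- m ≤ natDegree g
  have hmpos : ∀ i, i ≤ m → 0 < g.coeff i := by
    intro i hi
    induction i with
    | zero => exact hg_pos 0 (Nat.zero_le _)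
    | succ i ih => exact lt_of_lt_of_le (ih (by omega)) (hm1 i (by omega))
  have hme : m ≤ g.natDegree :=
    le_natDegree_of_ne_zero (ne_of_gt (hmpos m le_rfl))
  have hd1 : ∀ k ≤ m, 0 ≤ Dd g k := by
    intro k hk
    cases k with
    | zero => exact (hg_pos 0 (Nat.zero_le _)).le
    | succ k => simp only [Dd]; have := hm1 k (by omega); linarith
  have hd2 : ∀ k, m < k → Dd g k ≤ 0 := by
    intro k hk
    match k, hk with
    | (k+1), hk => simp only [Dd]; have := hm2 k (by omega); linarith
  -- existence of a strict descent
  have hex : ∃ n, (f * g).coeff (n+1) < (f * g).coeff n := by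
    refine ⟨f.natDegree + g.natDegree, ?_⟩
    have h0 : (f * g).coeff (f.natDegree + g.natDegree + 1) = 0 :=
      coeff_eq_zero_of_natDegree_lt (lt_of_le_of_lt (natDegree_mul_le) (by omega))
    have h1 : (f * g).coeff (f.natDegree + g.natDegree)
        = f.coeff f.natDegree * g.coeff g.natDegree := coeff_mul_degree_add_degree f g
    rw [h0, h1]
    exact mul_pos (hf_pos _ le_rfl) (hg_pos _ le_rfl)
  set M := Nat.find hex with hM
  have hJM : Pp f g m M ≤ Nc f g m M ∧ (Nc f g m M = 0 → f.natDegree + m ≤ M) := by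
    have hs := Nat.find_spec hex
    have hlt : Pp f g m M - Nc f g m M < 0 := by
      rw [← delta_split f g m hme M]; linarith
    constructor
    · linarith
    · intro hNz
      exfalso
      have := Pp_nonneg f g m M hf_pos hd1
      rw [hNz] at hlt
      linarith
  have hJ : ∀ j, Pp f g m (M + j) ≤ Nc f g m (M + j) ∧
      (Nc f g m (M + j) = 0 → f.natDegree + m ≤ M + j) := by
    intro j
    induction j with
    | zero => exact hJM
    | succ j ih =>
      have := step f g m hf_pos hf hd1 hd2 (M + j) ih.1 ih.2
      exact this
  refine ⟨M, ?_, ?_⟩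
  · intro i hi
    have := Nat.find_min hex hi
    linarith [not_lt.1 this]
  · intro i hMi
    have hji := hJ (i - M)
    rw [Nat.add_sub_cancel' hMi] at hji
    have := delta_split f g m hme i
    linarith [hji.1]


theorem stmt3 (f g : Polynomial ℝ)
    (hf_pos : ∀ i ≤ f.natDegree, 0 < f.coeff i)
    (hg_pos : ∀ i ≤ g.natDegree, 0 < g.coeff i)
    (hf : PolyLogConcave f) (hg : PolyUnimodal g) :
    PolyUnimodal (f * g) := by
  exact stmt3' f g hf_pos hg_pos hf hg
end

section
/- Let a_0, a_1, …, a_n be a sequence of nonnegative real numbers such that the polynomial Σ_{k=0}^n a_k x^k has only real zeros. Then for every 1 ≤ k ≤ n−1, a_k^2 ≥ a_{k-1}·a_{k+1}·(1 + 1/k)·(1 + 1/(n−k)); in particular the sequence is log-concave and unimodal. -/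
/-!
Real-rootedness survives differentiation (Rolle) and reversal `f ↦ Xⁿ f(1/X)`. Differentiating
`f = ∑ aᵢ Xⁱ` of degree `n` first `k - 1` times, reversing, and differentiating `n - k - 1` more
times leaves a real-rooted quadratic whose coefficients are `a_{k+1}, a_k, a_{k-1}` times
factorials; its discriminant is nonnegative, and that is Newton's inequality.

If moreover the `aᵢ` are nonnegative, every root is `≤ 0`, so `f = c Xᵗ ∏ (X + sᵢ)` with all
`sᵢ > 0` and the coefficients of `f` are positive exactly on an interval of indices. On that
interval log-concavity makes `a_{i+1} / aᵢ` nonincreasing, which forces unimodality around a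
maximal coefficient.
-/

open Polynomial Finset
open scoped Nat

namespace Multiset

theorem esymm_pos {R : Type*} [CommSemiring R] [PartialOrder R] [IsStrictOrderedRing R]
    {s : Multiset R} (hs : ∀ r ∈ s, 0 < r) {j : ℕ} (hj : j ≤ card s) : 0 < s.esymm j := by
  have hne : s.powersetCard j ≠ 0 := by
    rw [← Multiset.card_pos, card_powersetCard]; exact Nat.choose_pos hj
  simpa [esymm] using sum_lt_sum_of_nonempty (f := fun _ => (0 : R)) (g := prod) hne
    fun t ht => prod_pos fun r hr => hs r (mem_of_le (mem_powersetCard.1 ht).1 hr)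

end Multiset

namespace Polynomial

theorem splits_of_forall_im_eq_zero {f : ℝ[X]} (h : ∀ z : ℂ, aeval z f = 0 → z.im = 0) :
    f.Splits := by
  refine Splits.of_splits_map (algebraMap ℝ ℂ) (IsAlgClosed.splits _) fun z hz => ?_
  have hz0 : aeval z f = 0 := by
    rw [aeval_def, eval₂_eq_eval_map]; exact (mem_roots'.1 hz).2
  exact ⟨z.re, Complex.ext (by simp) (by simp [h z hz0])⟩

theorem natDegree_iterate_derivative_eq {R : Type*} [Semiring R] [IsAddTorsionFree R]
    (p : R[X]) (k : ℕ) : (derivative^[k] p).natDegree = p.natDegree - k := by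
  induction k with
  | zero => rfl
  | succ k ih => rw [Function.iterate_succ_apply', natDegree_derivative, ih, Nat.sub_sub]

theorem coeff_iterate_derivative_reverse_iterate_derivative {R : Type*} [Semiring R]
    [IsAddTorsionFree R] {f : R[X]} {k d : ℕ} (hdeg : f.natDegree = k + d + 2) {i j : ℕ}
    (hij : i + j = 2) :
    (derivative^[d] (derivative^[k] f).reverse).coeff j =
      ((j + d).descFactorial d * (i + k).descFactorial k) • f.coeff (i + k) := by
  have hq : (derivative^[k] f).natDegree = d + 2 := by
    rw [natDegree_iterate_derivative_eq]; omega
  rw [coeff_iterate_derivative, coeff_reverse, hq, revAt_le (by omega), coeff_iterate_derivative,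
    smul_smul, show d + 2 - (j + d) = i by omega, mul_comm]

theorem Splits.derivative {f : ℝ[X]} (hf : f.Splits) : f.derivative.Splits := by
  rw [splits_iff_card_roots] at hf ⊢
  refine le_antisymm (card_roots' _) ?_
  have := f.card_roots_le_derivative
  rw [natDegree_derivative]; omega

theorem Splits.iterate_derivative {f : ℝ[X]} (hf : f.Splits) (k : ℕ) :
    (Polynomial.derivative^[k] f).Splits := by
  induction k with
  | zero => exact hf
  | succ k ih => rw [Function.iterate_succ_apply']; exact ih.derivative

theorem Splits.reverse {K : Type*} [Field K] {f : K[X]} (hf : f.Splits) : f.reverse.Splits := by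
  induction hf using Submonoid.closure_induction with
  | mem g hg =>
    refine Splits.of_natDegree_le_one ((reverse_natDegree_le g).trans ?_)
    rcases hg with ⟨a, rfl⟩ | ⟨a, rfl⟩
    · simp
    · exact (natDegree_X_add_C a).le
  | one => rw [← C_1, reverse_C]; exact Splits.C 1
  | mul g h _ _ hg hh => rw [reverse_mul_of_domain]; exact hg.mul hh

theorem Splits.discrim_coeff_nonneg {K : Type*} [Field K] [LinearOrder K]
    [IsStrictOrderedRing K] {f : K[X]} (hf : f.Splits) (hdeg : f.natDegree ≤ 2) :
    0 ≤ discrim (f.coeff 2) (f.coeff 1) (f.coeff 0) := by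
  by_cases h2 : f.coeff 2 = 0
  · simp [discrim, h2, sq_nonneg]
  have hdeg2 : f.degree = 2 := by
    rw [degree_eq_natDegree (by rintro rfl; simp at h2),
      le_antisymm hdeg (le_natDegree_of_ne_zero h2)]
    rfl
  obtain ⟨x, hx⟩ := hf.exists_eval_eq_zero (by rw [hdeg2]; decide)
  rw [eval_eq_sum_range' (n := 3) (by omega)] at hx
  simp only [sum_range_succ, sum_range_zero] at hx
  rw [discrim_eq_sq_of_quadratic_eq_zero (x := x) (by linear_combination hx)]
  exact sq_nonneg _

theorem Splits.newton_of_natDegree_eq {f : ℝ[X]} (hf : f.Splits) {k d : ℕ}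
    (hdeg : f.natDegree = k + d + 2) :
    (k + 2) * (d + 2) * (f.coeff k * f.coeff (k + 2)) ≤
      (k + 1) * (d + 1) * f.coeff (k + 1) ^ 2 := by
  have hQ := ((hf.iterate_derivative k).reverse.iterate_derivative d).discrim_coeff_nonneg
    ((natDegree_iterate_derivative _ d).trans (by
      have := reverse_natDegree_le (Polynomial.derivative^[k] f)
      rw [natDegree_iterate_derivative_eq] at this; omega))
  have e1 (n : ℕ) : ((1 + n).descFactorial n : ℝ) = (n + 1) * n ! := by
    have := Nat.factorial_mul_descFactorial (show n ≤ n + 1 by omega)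
    rw [Nat.add_sub_cancel_left, Nat.factorial_one, one_mul, Nat.factorial_succ] at this
    rw [Nat.add_comm 1 n]
    exact_mod_cast this
  have e2 (n : ℕ) : ((2 + n).descFactorial n : ℝ) = (n + 2) * (n + 1) * n ! / 2 := by
    have := Nat.factorial_mul_descFactorial (show n ≤ n + 2 by omega)
    rw [Nat.add_sub_cancel_left, Nat.factorial_two, Nat.factorial_succ, Nat.factorial_succ] at this
    rw [Nat.add_comm 2 n, eq_div_iff two_ne_zero]
    have h := congrArg (Nat.cast : ℕ → ℝ) this
    push_cast at h
    linear_combination h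
  rw [coeff_iterate_derivative_reverse_iterate_derivative hdeg (show 2 + 0 = 2 from rfl),
    coeff_iterate_derivative_reverse_iterate_derivative hdeg (show 1 + 1 = 2 from rfl),
    coeff_iterate_derivative_reverse_iterate_derivative hdeg (show 0 + 2 = 2 from rfl),
    discrim, sub_nonneg] at hQ
  simp only [zero_add, nsmul_eq_mul, Nat.cast_mul, Nat.descFactorial_self, e1, e2] at hQ
  rw [Nat.add_comm 1 k, Nat.add_comm 2 k] at hQ
  have hpos : (0 : ℝ) < (k + 1) * (d + 1) * (d ! * k !) ^ 2 := by positivity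
  refine le_of_mul_le_mul_left ?_ hpos
  linear_combination hQ

theorem Splits.newton_inequality {f : ℝ[X]} (hf : f.Splits) {n k : ℕ} (hn : f.natDegree ≤ n)
    (hk : 1 ≤ k) (hkn : k + 1 ≤ n) :
    f.coeff (k - 1) * f.coeff (k + 1) * (1 + 1 / (k : ℝ)) * (1 + 1 / ((n - k : ℕ) : ℝ)) ≤
      f.coeff k ^ 2 := by
  obtain ⟨k, rfl⟩ : ∃ j, k = j + 1 := ⟨k - 1, by omega⟩
  rw [Nat.add_sub_cancel]
  by_cases hsign : f.coeff k * f.coeff (k + 1 + 1) ≤ 0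
  · have : (0 : ℝ) ≤ (1 + 1 / ((k + 1 : ℕ) : ℝ)) * (1 + 1 / ((n - (k + 1) : ℕ) : ℝ)) := by
      positivity
    nlinarith [sq_nonneg (f.coeff (k + 1))]
  obtain ⟨d, hd⟩ : ∃ d, f.natDegree = k + d + 2 := by
    refine ⟨f.natDegree - k - 2, ?_⟩
    by_contra h
    exact hsign (by rw [coeff_eq_zero_of_natDegree_lt (by omega : f.natDegree < k + 1 + 1)]; simp)
  have hnewton := hf.newton_of_natDegree_eq hd
  have hdn : ((d + 1 : ℕ) : ℝ) ≤ ((n - (k + 1) : ℕ) : ℝ) := by exact_mod_cast (by omega)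
  have hfac : 1 + 1 / ((n - (k + 1) : ℕ) : ℝ) ≤ (d + 2) / (d + 1) := by
    rw [show ((d : ℝ) + 2) / (d + 1) = 1 + 1 / ((d + 1 : ℕ) : ℝ) by push_cast; field_simp; ring]
    gcongr
  replace hsign := not_le.1 hsign
  calc f.coeff k * f.coeff (k + 1 + 1) * (1 + 1 / ((k + 1 : ℕ) : ℝ)) *
        (1 + 1 / ((n - (k + 1) : ℕ) : ℝ))
      ≤ f.coeff k * f.coeff (k + 1 + 1) * (1 + 1 / ((k + 1 : ℕ) : ℝ)) * ((d + 2) / (d + 1)) := by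
        gcongr
    _ = (k + 2) * (d + 2) * (f.coeff k * f.coeff (k + 2)) / ((k + 1) * (d + 1)) := by
        push_cast; field_simp; ring
    _ ≤ f.coeff (k + 1) ^ 2 := by
        rw [div_le_iff₀ (by positivity)]; linarith

theorem Splits.coeff_mul_coeff_le_sq {f : ℝ[X]} (hf : f.Splits) {k : ℕ} (hk : 1 ≤ k) :
    f.coeff (k - 1) * f.coeff (k + 1) ≤ f.coeff k ^ 2 := by
  rcases le_or_gt (f.coeff (k - 1) * f.coeff (k + 1)) 0 with hx | hx
  · exact hx.trans (sq_nonneg _)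
  have hkn : k + 1 ≤ f.natDegree := le_natDegree_of_ne_zero (right_ne_zero_of_mul hx.ne')
  have h1 : (1 : ℝ) ≤ 1 + 1 / (k : ℝ) := le_add_of_nonneg_right (by positivity)
  have h2 : (1 : ℝ) ≤ 1 + 1 / ((f.natDegree - k : ℕ) : ℝ) := le_add_of_nonneg_right (by positivity)
  refine le_trans ?_ (hf.newton_inequality le_rfl hk hkn)
  rw [mul_assoc _ (1 + _)]
  exact le_mul_of_one_le_right hx.le (one_le_mul_of_one_le_of_one_le h1 h2)

theorem roots_nonpos_of_coeff_nonneg {f : ℝ[X]} (h : ∀ i, 0 ≤ f.coeff i) {r : ℝ}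
    (hr : r ∈ f.roots) : r ≤ 0 := by
  by_contra! hpos
  have : 0 < f.eval r := by
    rw [eval_eq_sum, Polynomial.sum_def]
    exact Finset.sum_pos
      (fun i hi => mul_pos ((h i).lt_of_ne' (mem_support_iff.1 hi)) (pow_pos hpos i))
      (nonempty_support_iff.2 (ne_zero_of_mem_roots hr))
  exact this.ne' (isRoot_of_mem_roots hr)

theorem Splits.coeff_ne_zero_of_roots_neg {f : ℝ[X]} (hf : f.Splits) (hf0 : f ≠ 0)
    (hroots : ∀ r ∈ f.roots, r < 0) {l : ℕ} (hl : l ≤ f.natDegree) : f.coeff l ≠ 0 := by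
  set s := f.roots.map Neg.neg
  have hs (r : ℝ) (hr : r ∈ s) : 0 < r := by
    obtain ⟨x, hx, rfl⟩ := Multiset.mem_map.1 hr
    exact neg_pos.2 (hroots x hx)
  have hcard : Multiset.card s = f.natDegree := by simp [s, hf.natDegree_eq_card_roots]
  have hprod : (f.roots.map fun r => X - C r) = s.map fun r => X + C r := by
    simp [s, Multiset.map_map, sub_eq_add_neg]
  rw [hf.eq_prod_roots, coeff_C_mul, hprod, Multiset.prod_X_add_C_coeff s (hcard ▸ hl)]
  exact mul_ne_zero (leadingCoeff_ne_zero.2 hf0) (Multiset.esymm_pos hs (by omega)).ne'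

theorem Splits.coeff_ne_zero_of_roots_nonpos {f : ℝ[X]} (hf : f.Splits)
    (hroots : ∀ r ∈ f.roots, r ≤ 0) {i j l : ℕ} (hi : f.coeff i ≠ 0) (hj : f.coeff j ≠ 0)
    (hil : i ≤ l) (hlj : l ≤ j) : f.coeff l ≠ 0 := by
  have hf0 : f ≠ 0 := by rintro rfl; exact hi (coeff_zero i)
  obtain ⟨g, hfg, hg⟩ := f.exists_eq_pow_rootMultiplicity_mul_and_not_dvd hf0 0
  set t := f.rootMultiplicity 0
  rw [map_zero, sub_zero] at hfg hg
  have hgf : g ∣ f := hfg ▸ dvd_mul_left g _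
  have hg0 : g ≠ 0 := by rintro rfl; exact hg (dvd_zero X)
  have hgroots (r : ℝ) (hr : r ∈ g.roots) : r < 0 := by
    refine (hroots r (Multiset.mem_of_le (roots.le_of_dvd hf0 hgf) hr)).lt_of_ne ?_
    rintro rfl
    exact hg (X_dvd_iff.2 (coeff_zero_eq_eval_zero g ▸ isRoot_of_mem_roots hr))
  rw [hfg, coeff_X_pow_mul'] at hi hj ⊢
  have ht : t ≤ i := by by_contra h; exact hi (if_neg h)
  rw [if_pos (ht.trans hil)]
  rw [if_pos (ht.trans (hil.trans hlj))] at hj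
  exact (hf.of_dvd hf0 hgf).coeff_ne_zero_of_roots_neg hg0 hgroots
    ((Nat.sub_le_sub_right hlj t).trans (le_natDegree_of_ne_zero hj))

theorem Splits.coeff_pos_of_coeff_nonneg {f : ℝ[X]} (hf : f.Splits) (h : ∀ i, 0 ≤ f.coeff i)
    {i j l : ℕ} (hi : 0 < f.coeff i) (hj : 0 < f.coeff j) (hil : i ≤ l) (hlj : l ≤ j) :
    0 < f.coeff l :=
  (h l).lt_of_ne' <| hf.coeff_ne_zero_of_roots_nonpos
    (fun _ hr => roots_nonpos_of_coeff_nonneg h hr) hi.ne' hj.ne' hil hlj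

end Polynomial

theorem succ_mul_le_mul_succ_of_logConcave {a : ℕ → ℝ} {i j : ℕ} (hij : i ≤ j)
    (hpos : ∀ l, i ≤ l → l ≤ j → 0 < a l)
    (hlc : ∀ l, i ≤ l → l < j → a l * a (l + 2) ≤ a (l + 1) ^ 2) :
    a (j + 1) * a i ≤ a (i + 1) * a j := by
  induction j, hij using Nat.le_induction with
  | base => rw [mul_comm]
  | succ j hij ih =>
    have ih := ih (fun l h1 h2 => hpos l h1 (by omega)) (fun l h1 h2 => hlc l h1 (by omega))
    have hlcj := hlc j hij (by omega)
    have hj := hpos j hij (by omega)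
    have hj1 := hpos (j + 1) (by omega) le_rfl
    have hi := hpos i le_rfl (by omega)
    refine le_of_mul_le_mul_left ?_ hj
    nlinarith

theorem exists_unimodal_of_logConcave {a : ℕ → ℝ} {n : ℕ} (ha : ∀ i ≤ n, 0 ≤ a i)
    (hlc : ∀ l, l + 2 ≤ n → a l * a (l + 2) ≤ a (l + 1) ^ 2)
    (hpos : ∀ i j l, j ≤ n → 0 < a i → 0 < a j → i ≤ l → l ≤ j → 0 < a l) :
    ∃ m ≤ n, (∀ i, i < m → a i ≤ a (i + 1)) ∧ ∀ i, m ≤ i → i < n → a (i + 1) ≤ a i := by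
  obtain ⟨M, hM, hmax⟩ := Finset.exists_max_image (range (n + 1)) a ⟨0, by simp⟩
  rw [mem_range, Nat.lt_succ_iff] at hM
  replace hmax (i : ℕ) (hi : i ≤ n) : a i ≤ a M := hmax i (mem_range.2 (Nat.lt_succ_of_le hi))
  refine ⟨M, hM, fun i hiM => ?_, fun i hMi hin => ?_⟩
  · by_contra! hlt
    have hi : 0 < a i := (ha (i + 1) (by omega)).trans_lt hlt
    have hMpos : 0 < a M := hi.trans_le (hmax i (by omega))
    have hratio := succ_mul_le_mul_succ_of_logConcave (a := a) (i := i) (j := M - 1) (by omega)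
      (fun l h1 _ => hpos i M l hM hi hMpos h1 (by omega)) (fun l _ _ => hlc l (by omega))
    rw [Nat.sub_add_cancel (by omega)] at hratio
    have hM1 : 0 < a (M - 1) := hpos i M (M - 1) hM hi hMpos (by omega) (by omega)
    nlinarith [hmax (M - 1) (by omega)]
  · by_contra! hlt
    have hi1 : 0 < a (i + 1) := (ha i (by omega)).trans_lt hlt
    have hMpos : 0 < a M := hi1.trans_le (hmax _ (by omega))
    have hratio := succ_mul_le_mul_succ_of_logConcave (a := a) hMi
      (fun l h1 _ => hpos M (i + 1) l (by omega) hMpos hi1 h1 (by omega))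
      (fun l _ _ => hlc l (by omega))
    nlinarith [hmax (M + 1) (by omega), ha i (by omega)]

theorem stmt4 (n : ℕ) (a : ℕ → ℝ)
    (ha_nonneg : ∀ i ≤ n, 0 ≤ a i)
    (hreal : ∀ z : ℂ, Polynomial.aeval z (∑ k ∈ Finset.range (n + 1), C (a k) * X ^ k) = 0 →
      z.im = 0) :
    (∀ k, 1 ≤ k → k ≤ n - 1 →
      a (k - 1) * a (k + 1) * (1 + 1 / (k : ℝ)) * (1 + 1 / ((n - k : ℕ) : ℝ)) ≤ (a k) ^ 2) ∧
    (∀ k, 1 ≤ k → k ≤ n - 1 → a (k - 1) * a (k + 1) ≤ (a k) ^ 2) ∧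
    (∃ m ≤ n, (∀ i, i < m → a i ≤ a (i + 1)) ∧
      (∀ i, m ≤ i → i < n → a (i + 1) ≤ a i)) := by
  set P : ℝ[X] := ∑ k ∈ Finset.range (n + 1), C (a k) * X ^ k
  have hcoeff (i : ℕ) (hi : i ≤ n) : P.coeff i = a i := by simp [P, hi]
  have hnonneg (i : ℕ) : 0 ≤ P.coeff i := by by_cases hi : i ≤ n <;> simp [P, hi, ha_nonneg]
  have hdeg : P.natDegree ≤ n :=
    natDegree_le_iff_coeff_eq_zero.2 fun i hi => by simp [P, (Nat.cast_lt.1 hi).not_ge]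
  have hP : P.Splits := splits_of_forall_im_eq_zero hreal
  have logConcave (k : ℕ) (hk : 1 ≤ k) (hkn : k ≤ n - 1) : a (k - 1) * a (k + 1) ≤ a k ^ 2 := by
    simpa only [hcoeff _ (by omega : k - 1 ≤ n), hcoeff _ (by omega : k + 1 ≤ n),
      hcoeff _ (by omega : k ≤ n)] using hP.coeff_mul_coeff_le_sq hk
  refine ⟨fun k hk hkn => ?_, logConcave, exists_unimodal_of_logConcave ha_nonneg
    (fun l hl => by simpa using logConcave (l + 1) (by omega) (by omega))
    fun i j l hj hi hj' hil hlj => ?_⟩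
  · simpa only [hcoeff _ (by omega : k - 1 ≤ n), hcoeff _ (by omega : k + 1 ≤ n),
      hcoeff _ (by omega : k ≤ n)] using hP.newton_inequality hdeg hk (by omega)
  · rw [← hcoeff i (by omega)] at hi
    rw [← hcoeff j hj] at hj'
    rw [← hcoeff l (by omega)]
    exact hP.coeff_pos_of_coeff_nonneg hnonneg hi hj' hil hlj
end

section
/- If d_0, d_1, …, d_n is a positive log-concave sequence of real numbers, then the polynomial Σ_{i=0}^n d_i (1+x)^i, expanded in powers of x, has a log-concave coefficient sequence. -/
open Polynomial Finset

/-!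
Write `q_j = ∑_{i=j}^n d_i (1+x)^(i-j)`, so that `q_j = d_j + (1+x) q_{j+1}` and the coefficients of
`q_j` are the sums of adjacent terms of the sequence `(d_j, coefficients of q_{j+1})`. Taking sums
of adjacent terms preserves log-concavity of nonnegative sequences without internal zeros, so it
suffices to show by downward induction on `j` that `(d_{j-1}, coefficients of q_j)` is log-concave.
Beyond the first term this is the induction hypothesis pushed through adjacent sums; at the
first term it reduces, using `d_{j-1} d_i ≤ d_j d_{i-1}` for `j ≤ i`, to log-concavity of
`(d_j, coefficients of q_{j+1})`.
-/

/-- Log-concavity alone is not preserved by `adjSum` (think of `(1, 0, 0, 1)`). -/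
structure IsLogConcaveSeq (s : ℕ → ℝ) : Prop where
  nonneg : ∀ k, 0 ≤ s k
  eq_zero_succ : ∀ k, s k = 0 → s (k + 1) = 0
  mul_le_sq : ∀ k, s k * s (k + 2) ≤ s (k + 1) ^ 2

def seqCons (a : ℝ) (s : ℕ → ℝ) : ℕ → ℝ
  | 0 => a
  | k + 1 => s k

def adjSum (s : ℕ → ℝ) (k : ℕ) : ℝ := s k + s (k + 1)

theorem IsLogConcaveSeq.mul_add_three_le {s : ℕ → ℝ} (hs : IsLogConcaveSeq s) (k : ℕ) :
    s k * s (k + 3) ≤ s (k + 1) * s (k + 2) := by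
  have h₀ := hs.nonneg k
  have h₃ := hs.nonneg (k + 3)
  rcases (hs.nonneg (k + 1)).eq_or_lt with h₁ | h₁
  · have := hs.eq_zero_succ _ (hs.eq_zero_succ _ h₁.symm)
    simp [this, ← h₁]
  rcases (hs.nonneg (k + 2)).eq_or_lt with h₂ | h₂
  · simp [hs.eq_zero_succ _ h₂.symm, ← h₂]
  have := _root_.mul_le_mul (hs.mul_le_sq k) (hs.mul_le_sq (k + 1)) (by positivity) (by positivity)
  nlinarith [mul_pos h₁ h₂]

theorem IsLogConcaveSeq.adjSum {s : ℕ → ℝ} (hs : IsLogConcaveSeq s) :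
    IsLogConcaveSeq (adjSum s) where
  nonneg k := add_nonneg (hs.nonneg k) (hs.nonneg (k + 1))
  eq_zero_succ k h := by
    have h₀ := (add_eq_zero_iff_of_nonneg (hs.nonneg k) (hs.nonneg (k + 1))).1 h
    simp [_root_.adjSum, h₀.2, hs.eq_zero_succ _ h₀.2]
  mul_le_sq k := by
    have := hs.mul_add_three_le k
    have := hs.mul_le_sq k
    have := hs.mul_le_sq (k + 1)
    simp only [_root_.adjSum]
    nlinarith

theorem IsLogConcaveSeq.seqCons {a : ℝ} {t : ℕ → ℝ} (ht : IsLogConcaveSeq t) (ha : 0 < a)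
    (h : a * t 1 ≤ t 0 ^ 2) : IsLogConcaveSeq (seqCons a t) where
  nonneg
    | 0 => ha.le
    | k + 1 => ht.nonneg k
  eq_zero_succ
    | 0, h0 => absurd h0 ha.ne'
    | k + 1, h0 => ht.eq_zero_succ k h0
  mul_le_sq
    | 0 => h
    | k + 1 => ht.mul_le_sq k

section TailPolynomials

variable {n : ℕ} {d : ℕ → ℝ}

theorem mul_le_mul_of_logConcave (hpos : ∀ i ≤ n, 0 < d i)
    (hlc : ∀ i, i + 2 ≤ n → d i * d (i + 2) ≤ d (i + 1) ^ 2) {j i : ℕ} (hji : j ≤ i)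
    (hi : i + 1 ≤ n) : d j * d (i + 1) ≤ d (j + 1) * d i := by
  induction i, hji using Nat.le_induction with
  | base => rw [mul_comm]
  | succ i hji ih =>
    have hdi := hpos i (by omega)
    have hdi₁ := hpos (i + 1) (by omega)
    have hdi₂ := hpos (i + 2) hi
    have hdj₁ := hpos (j + 1) (by omega)
    have := mul_le_mul (ih (by omega)) (hlc i hi) (by positivity) (by positivity)
    nlinarith [mul_pos hdi hdi₁]

variable (n d) in
/-- The `k`-th coefficient of `∑_{i=j}^n d_i (1+x)^(i-j)`. -/
noncomputable def tailCoeff (j k : ℕ) : ℝ :=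
  ∑ i ∈ Ico j (n + 1), d i * ((i - j).choose k : ℝ)

theorem tailCoeff_eq_adjSum {j : ℕ} (hj : j < n) :
    tailCoeff n d j = adjSum (seqCons (d j) (tailCoeff n d (j + 1))) := by
  funext k
  rw [tailCoeff, sum_eq_sum_Ico_succ_bot (by omega), Nat.sub_self]
  cases k with
  | zero => simp [adjSum, seqCons, tailCoeff]
  | succ k =>
    simp only [adjSum, seqCons, tailCoeff, Nat.choose_zero_succ, Nat.cast_zero, mul_zero,
      zero_add, ← sum_add_distrib, ← mul_add]
    refine sum_congr rfl fun i hi => ?_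
    rw [show i - j = i - (j + 1) + 1 by grind, Nat.choose_succ_succ', Nat.cast_add]

theorem isLogConcaveSeq_tailCoeff_self (h : 0 < d n) : IsLogConcaveSeq (tailCoeff n d n) := by
  have hcoeff : ∀ k, tailCoeff n d n (k + 1) = 0 := by simp [tailCoeff]
  have hcoeff₀ : tailCoeff n d n 0 = d n := by simp [tailCoeff]
  refine ⟨fun k => ?_, fun k hk => ?_, fun k => ?_⟩
  · cases k <;> simp [hcoeff, hcoeff₀, h.le]
  · cases k <;> simp_all
  · rw [hcoeff]; simp [sq_nonneg]

theorem mul_tailCoeff_le_mul_tailCoeff (hpos : ∀ i ≤ n, 0 < d i)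
    (hlc : ∀ i, i + 2 ≤ n → d i * d (i + 2) ≤ d (i + 1) ^ 2) (j k : ℕ) :
    d j * tailCoeff n d (j + 2) k ≤ d (j + 1) * tailCoeff n d (j + 1) k := by
  unfold tailCoeff
  calc d j * ∑ i ∈ Ico (j + 2) (n + 1), d i * ((i - (j + 2)).choose k : ℝ)
      = ∑ i ∈ Ico (j + 1) n, d j * (d (i + 1) * ((i - (j + 1)).choose k : ℝ)) := by
        rw [mul_sum, show j + 2 = j + 1 + 1 by rfl, ← sum_Ico_add']
        simp
    _ ≤ ∑ i ∈ Ico (j + 1) n, d (j + 1) * (d i * ((i - (j + 1)).choose k : ℝ)) := by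
        refine sum_le_sum fun i hi => ?_
        rw [mem_Ico] at hi
        rw [← mul_assoc, ← mul_assoc]
        exact mul_le_mul_of_nonneg_right
          (mul_le_mul_of_logConcave hpos hlc (by omega : j ≤ i) hi.2) (by positivity)
    _ ≤ ∑ i ∈ Ico (j + 1) (n + 1), d (j + 1) * (d i * ((i - (j + 1)).choose k : ℝ)) := by
        apply sum_le_sum_of_subset_of_nonneg (Ico_subset_Ico_right n.le_succ)
        intro i hi _
        rw [mem_Ico] at hi
        have := hpos i (by omega)
        have := hpos (j + 1) (by omega)
        positivity
    _ = d (j + 1) * ∑ i ∈ Ico (j + 1) (n + 1), d i * ((i - (j + 1)).choose k : ℝ) := by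
        rw [mul_sum]

theorem mul_tailCoeff_one_le_sq (hpos : ∀ i ≤ n, 0 < d i)
    (hlc : ∀ i, i + 2 ≤ n → d i * d (i + 2) ≤ d (i + 1) ^ 2) {j : ℕ} (hj : j + 2 ≤ n)
    (h : d (j + 1) * tailCoeff n d (j + 2) 1 ≤ tailCoeff n d (j + 2) 0 ^ 2) :
    d j * tailCoeff n d (j + 1) 1 ≤ tailCoeff n d (j + 1) 0 ^ 2 := by
  have h₀ := mul_tailCoeff_le_mul_tailCoeff hpos hlc j 0
  have h₁ := mul_tailCoeff_le_mul_tailCoeff hpos hlc j 1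
  have hrec := congrFun (tailCoeff_eq_adjSum (n := n) (d := d) (j := j + 1) (by omega))
  rw [hrec 0, hrec 1] at *
  simp only [adjSum, seqCons] at *
  nlinarith

theorem isLogConcaveSeq_seqCons_tailCoeff (hpos : ∀ i ≤ n, 0 < d i)
    (hlc : ∀ i, i + 2 ≤ n → d i * d (i + 2) ≤ d (i + 1) ^ 2) {j : ℕ} (hj : j < n) :
    IsLogConcaveSeq (seqCons (d j) (tailCoeff n d (j + 1))) := by
  induction hm : n - j generalizing j with
  | zero => omega
  | succ m ih =>
    rcases (Nat.succ_le_of_lt hj).eq_or_lt with rfl | hj₁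
    · refine .seqCons (isLogConcaveSeq_tailCoeff_self (hpos _ le_rfl)) (hpos j hj.le) ?_
      simp [tailCoeff, sq_nonneg]
    · have ih := ih hj₁ (by omega)
      refine .seqCons ?_ (hpos j hj.le) (mul_tailCoeff_one_le_sq hpos hlc hj₁ (ih.mul_le_sq 0))
      rw [tailCoeff_eq_adjSum hj₁]
      exact ih.adjSum

end TailPolynomials

theorem stmt5 (n : ℕ) (d : ℕ → ℝ)
    (hd_pos : ∀ i ≤ n, 0 < d i)
    (hd_lc : ∀ i, 1 ≤ i → i ≤ n - 1 → d (i - 1) * d (i + 1) ≤ (d i) ^ 2) :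
    PolyLogConcave (∑ i ∈ Finset.range (n + 1), C (d i) * (1 + X) ^ i) := by
  have hlc : ∀ i, i + 2 ≤ n → d i * d (i + 2) ≤ d (i + 1) ^ 2 := fun i hi =>
    hd_lc (i + 1) (by omega) (by omega)
  have hcoeff : (∑ i ∈ Finset.range (n + 1), C (d i) * (1 + X) ^ i).coeff = tailCoeff n d 0 := by
    funext k
    simp only [finsetSum_coeff, coeff_C_mul, coeff_one_add_X_pow, tailCoeff, range_eq_Ico,
      Nat.sub_zero]
  have hseq : IsLogConcaveSeq (tailCoeff n d 0) := by
    rcases n.eq_zero_or_pos with rfl | hn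
    · exact isLogConcaveSeq_tailCoeff_self (hd_pos 0 le_rfl)
    · rw [tailCoeff_eq_adjSum hn]
      exact (isLogConcaveSeq_seqCons_tailCoeff hd_pos hlc hn).adjSum
  intro k hk
  obtain ⟨k, rfl⟩ := Nat.exists_eq_add_of_le' hk
  rw [hcoeff]
  exact hseq.mul_le_sq k
end

section
/- Let d_0, d_1, …, d_n be a nonnegative sequence of real numbers such that the subsequence of nonzero terms is increasing (i.e., whenever i < j with d_i ≠ 0 and d_j ≠ 0, one has d_i ≤ d_j). Then the polynomial Σ_{i=0}^n d_i (1+x)^i, expanded in powers of x, has a unimodal coefficient sequence. -/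
open Polynomial Finset

/-!
Write `c_k = ∑ d_i C(i,k)` and let `N` be the largest index with `d_N ≠ 0`; the mode is `N / 2`.
Past it, every row `i ≤ N` of Pascal's triangle is already non-increasing, so `c_{k+1} ≤ c_k`.
Before it (`2k + 2 ≤ N`), the increment `g_k(i) = C(i,k+1) - C(i,k)` is `≤ 0` for `i ≤ 2k` and
`≥ 0` for `i ≥ 2k + 1`. Since the nonzero `d_i` are at most `d_N`, this gives
`c_{k+1} - c_k ≥ d_N (∑_{i ≤ 2k} g_k(i) + g_k(N))`, and the bracket is nonnegative: by the
hockey-stick identity and the symmetry of row `2k + 2` it equals `g_k(N) - g_k(2k+2)`, and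
`g_k` is non-decreasing from `2k + 1` on.
-/

def chooseGap (k i : ℕ) : ℤ := i.choose (k + 1) - i.choose k

lemma chooseGap_nonpos {k i : ℕ} (h : i ≤ 2 * k + 1) : chooseGap k i ≤ 0 := by
  have hmul : i.choose (k + 1) * (k + 1) ≤ i.choose k * (k + 1) := by
    rw [Nat.choose_succ_right_eq]
    exact Nat.mul_le_mul_left _ (by omega)
  rw [chooseGap, sub_nonpos]
  exact_mod_cast Nat.le_of_mul_le_mul_right hmul k.succ_pos

lemma chooseGap_nonneg {k i : ℕ} (h : 2 * k + 1 ≤ i) : 0 ≤ chooseGap k i := by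
  have hmul : i.choose k * (k + 1) ≤ i.choose (k + 1) * (k + 1) := by
    rw [Nat.choose_succ_right_eq]
    exact Nat.mul_le_mul_left _ (by omega)
  rw [chooseGap, sub_nonneg]
  exact_mod_cast Nat.le_of_mul_le_mul_right hmul k.succ_pos

lemma chooseGap_succ_succ (k i : ℕ) :
    chooseGap (k + 1) (i + 1) = chooseGap (k + 1) i + chooseGap k i := by
  simp only [chooseGap, Nat.choose_succ_succ', Nat.cast_add]
  ring

lemma chooseGap_le_of_le {k i j : ℕ} (hi : 2 * k + 1 ≤ i) (hij : i ≤ j) :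
    chooseGap k i ≤ chooseGap k j := by
  induction j, hij using Nat.le_induction with
  | base => rfl
  | succ j hij ih =>
    refine ih.trans ?_
    cases k with
    | zero => simp [chooseGap]
    | succ k => linarith [chooseGap_succ_succ k j, chooseGap_nonneg (k := k) (i := j) (by omega)]

lemma sum_range_chooseGap (k M : ℕ) : ∑ i ∈ range M, chooseGap k i = chooseGap (k + 1) M := by
  induction M with
  | zero => simp [chooseGap]
  | succ M ih => rw [sum_range_succ, ih, chooseGap_succ_succ]

lemma chooseGap_succ_add_chooseGap_central (k : ℕ) :
    chooseGap (k + 1) (2 * k + 2) + chooseGap k (2 * k + 2) = 0 := by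
  have : (2 * k + 2).choose (k + 2) = (2 * k + 2).choose k := Nat.choose_symm_of_eq_add (by omega)
  simp only [chooseGap, this]
  ring

lemma sum_range_chooseGap_add_nonneg {k N : ℕ} (hN : 2 * k + 2 ≤ N) :
    0 ≤ ∑ i ∈ range (2 * k + 1), chooseGap k i + chooseGap k N := by
  have hmid : chooseGap k (2 * k + 1) = 0 :=
    le_antisymm (chooseGap_nonpos le_rfl) (chooseGap_nonneg le_rfl)
  have hrow := chooseGap_succ_succ k (2 * k + 1)
  rw [sum_range_chooseGap]
  have hmono : chooseGap k (2 * k + 2) ≤ chooseGap k N := chooseGap_le_of_le (by omega) hN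
  linarith [chooseGap_succ_add_chooseGap_central k]

lemma coeff_succ_sub_coeff_sum_C_mul_one_add_X_pow (s : Finset ℕ) (d : ℕ → ℝ) (k : ℕ) :
    (∑ i ∈ s, C (d i) * (1 + X) ^ i).coeff (k + 1) - (∑ i ∈ s, C (d i) * (1 + X) ^ i).coeff k
      = ∑ i ∈ s, d i * chooseGap k i := by
  simp only [finsetSum_coeff, coeff_C_mul, coeff_one_add_X_pow, ← sum_sub_distrib, chooseGap]
  push_cast
  simp only [mul_sub]

lemma sum_mul_chooseGap_nonpos {s : Finset ℕ} {d : ℕ → ℝ} {k : ℕ} (hd : ∀ i ∈ s, 0 ≤ d i)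
    (hs : ∀ i ∈ s, d i ≠ 0 → i ≤ 2 * k + 1) : ∑ i ∈ s, d i * chooseGap k i ≤ 0 := by
  refine sum_nonpos fun i hi => ?_
  by_cases hdi : d i = 0
  · simp [hdi]
  · have hgap : (chooseGap k i : ℝ) ≤ 0 := by exact_mod_cast chooseGap_nonpos (hs i hi hdi)
    exact mul_nonpos_of_nonneg_of_nonpos (hd i hi) hgap

lemma sum_mul_chooseGap_nonneg {n N k : ℕ} {d : ℕ → ℝ} (hd : ∀ i ≤ n, 0 ≤ d i) (hNn : N ≤ n)
    (hkN : 2 * k + 2 ≤ N) (hdN : ∀ i < 2 * k + 1, d i ≠ 0 → d i ≤ d N) :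
    0 ≤ ∑ i ∈ range (n + 1), d i * chooseGap k i := by
  have hlow : d N * ∑ i ∈ range (2 * k + 1), (chooseGap k i : ℝ)
      ≤ ∑ i ∈ range (2 * k + 1), d i * chooseGap k i := by
    rw [mul_sum]
    refine sum_le_sum fun i hi => ?_
    have hi : i < 2 * k + 1 := mem_range.mp hi
    have hgap : (chooseGap k i : ℝ) ≤ 0 := by exact_mod_cast chooseGap_nonpos (k := k) hi.le
    by_cases hdi : d i = 0
    · simpa [hdi] using mul_nonpos_of_nonneg_of_nonpos (hd N hNn) hgap
    · exact mul_le_mul_of_nonpos_right (hdN i hi hdi) hgap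
  have hhigh : d N * chooseGap k N ≤ ∑ i ∈ Ico (2 * k + 1) (n + 1), d i * chooseGap k i :=
    single_le_sum (f := fun i => d i * (chooseGap k i : ℝ))
      (fun i hi => mul_nonneg (hd i (Nat.lt_succ_iff.mp (mem_Ico.mp hi).2))
        (by exact_mod_cast chooseGap_nonneg (mem_Ico.mp hi).1))
      (mem_Ico.mpr ⟨by omega, by omega⟩)
  have hbracket : (0 : ℝ) ≤ ∑ i ∈ range (2 * k + 1), (chooseGap k i : ℝ) + chooseGap k N := by
    exact_mod_cast sum_range_chooseGap_add_nonneg hkN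
  have hbound := mul_nonneg (hd N hNn) hbracket
  rw [mul_add] at hbound
  rw [← sum_range_add_sum_Ico _ (by omega : 2 * k + 1 ≤ n + 1)]
  linarith

theorem stmt6 (n : ℕ) (d : ℕ → ℝ)
    (hd_nonneg : ∀ i ≤ n, 0 ≤ d i)
    (hd_incr : ∀ i j, i < j → j ≤ n → d i ≠ 0 → d j ≠ 0 → d i ≤ d j) :
    PolyUnimodal (∑ i ∈ Finset.range (n + 1), C (d i) * (1 + X) ^ i) := by
  -- If every `d i` vanishes, `N = 0` and the increasing half is vacuous.
  set N := Nat.findGreatest (d · ≠ 0) n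
  have hNn : N ≤ n := Nat.findGreatest_le n
  have hle_N : ∀ i ≤ n, d i ≠ 0 → i ≤ N := fun i hi hdi => Nat.le_findGreatest hi hdi
  have hdN : ∀ i ≤ n, d i ≠ 0 → d N ≠ 0 := fun i hi hdi =>
    Nat.findGreatest_spec (P := (d · ≠ 0)) hi hdi
  refine ⟨N / 2, fun k hk => ?_, fun k hk => ?_⟩
  · rw [← sub_nonneg, coeff_succ_sub_coeff_sum_C_mul_one_add_X_pow]
    refine sum_mul_chooseGap_nonneg hd_nonneg hNn (by omega) fun i hi hdi => ?_
    exact hd_incr i N (by omega) hNn hdi (hdN i (by omega) hdi)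
  · rw [← sub_nonpos, coeff_succ_sub_coeff_sum_C_mul_one_add_X_pow]
    refine sum_mul_chooseGap_nonpos (fun i hi => hd_nonneg i (mem_range_succ_iff.mp hi)) ?_
    intro i hi hdi
    have := hle_N i (mem_range_succ_iff.mp hi) hdi
    omega
end

section
/- If P(x) is a polynomial with positive nondecreasing coefficients (a_0 ≤ a_1 ≤ … ≤ a_n, all positive), then P(x+1), expanded in powers of x, has a unimodal coefficient sequence. -/
open Polynomial

/-- Binomial coefficients decrease past the middle. -/
lemma bm_choose_dec {i j : ℕ} (h : i ≤ 2 * j + 1) : i.choose (j + 1) ≤ i.choose j := by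
  have h1 := Nat.choose_succ_right_eq i j
  have h2 : i.choose (j + 1) * (j + 1) ≤ i.choose j * (j + 1) := by
    rw [h1]; exact Nat.mul_le_mul (le_refl _) (by omega)
  exact Nat.le_of_mul_le_mul_right h2 (by omega)

/-- Binomial coefficients increase up to the middle. -/
lemma bm_choose_inc {i j : ℕ} (h : 2 * j + 1 ≤ i) : i.choose j ≤ i.choose (j + 1) := by
  have h1 := Nat.choose_succ_right_eq i j
  have h2 : i.choose j * (j + 1) ≤ i.choose (j + 1) * (j + 1) := by
    rw [h1]; exact Nat.mul_le_mul (le_refl _) (by omega)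
  exact Nat.le_of_mul_le_mul_right h2 (by omega)

/-- Hockey stick identity. -/
lemma bm_hockey (j N : ℕ) : ∑ k ∈ Finset.range N, k.choose j = N.choose (j + 1) := by
  induction N with
  | zero => simp
  | succ N ih =>
    rw [Finset.sum_range_succ, ih, Nat.choose_succ_succ' N j]
    omega

lemma bm_sumd (j N : ℕ) :
    ∑ k ∈ Finset.range N, ((k.choose (j + 1) : ℝ) - k.choose j)
      = (N.choose (j + 2) : ℝ) - N.choose (j + 1) := by
  rw [Finset.sum_sub_distrib, ← Nat.cast_sum, ← Nat.cast_sum, bm_hockey, bm_hockey]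

/-- Telescoping sum. -/
lemma bm_tel (a : ℕ → ℝ) (k : ℕ) :
    ∑ m ∈ Finset.range (k + 1), (if m = 0 then a 0 else a m - a (m - 1)) = a k := by
  induction k with
  | zero => simp
  | succ k ih =>
    rw [Finset.sum_range_succ, ih]
    simp only [Nat.succ_ne_zero, if_false, Nat.add_sub_cancel]
    ring

/-- The key partial-sum nonnegativity. -/
lemma bm_key {n j : ℕ} (hj : 2 * j + 2 ≤ n) (m : ℕ) :
    0 ≤ ∑ k ∈ Finset.Icc m n, ((k.choose (j + 1) : ℝ) - k.choose j) := by
  rcases le_or_gt m n with hmn | hmn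
  · rcases le_or_gt m (2 * j + 3) with hm | hm
    · have hset : Finset.Icc m n = Finset.range (n + 1) \ Finset.range m := by
        ext x; simp only [Finset.mem_Icc, Finset.mem_sdiff, Finset.mem_range]; omega
      have hsub : Finset.range m ⊆ Finset.range (n + 1) := by
        intro x hx; simp only [Finset.mem_range] at *; omega
      rw [hset, Finset.sum_sdiff_eq_sub hsub, bm_sumd, bm_sumd]
      have h1 : (n + 1).choose (j + 1) ≤ (n + 1).choose (j + 2) :=
        bm_choose_inc (by omega)
      have h2 : m.choose (j + 2) ≤ m.choose (j + 1) :=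
        bm_choose_dec (i := m) (j := j + 1) (by omega)
      have h1' : ((n + 1).choose (j + 1) : ℝ) ≤ (n + 1).choose (j + 2) := by exact_mod_cast h1
      have h2' : (m.choose (j + 2) : ℝ) ≤ m.choose (j + 1) := by exact_mod_cast h2
      linarith
    · apply Finset.sum_nonneg
      intro k hk
      simp only [Finset.mem_Icc] at hk
      have : k.choose j ≤ k.choose (j + 1) := bm_choose_inc (by omega)
      have : (k.choose j : ℝ) ≤ k.choose (j + 1) := by exact_mod_cast this
      linarith
  · rw [Finset.Icc_eq_empty (by omega), Finset.sum_empty]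

/-- Boros–Moll: if `P` has positive nondecreasing coefficients, then `P(x+1)` is unimodal. -/
theorem stmt7 (P : Polynomial ℝ)
    (hpos : ∀ i ≤ P.natDegree, 0 < P.coeff i)
    (hmono : ∀ i, i < P.natDegree → P.coeff i ≤ P.coeff (i + 1)) :
    PolyUnimodal (P.comp (X + 1)) := by
  set n := P.natDegree with hn
  -- coefficient formula
  have hcoeff : ∀ j : ℕ, (P.comp (X + 1)).coeff j
      = ∑ i ∈ Finset.range (n + 1), P.coeff i * (i.choose j : ℝ) := by
    intro j
    conv_lhs => rw [P.as_sum_range_C_mul_X_pow, Polynomial.sum_comp]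
    rw [Polynomial.finset_sum_coeff]
    apply Finset.sum_congr rfl
    intro i _
    rw [Polynomial.mul_comp, Polynomial.C_comp, Polynomial.pow_comp, Polynomial.X_comp,
      Polynomial.coeff_C_mul, Polynomial.coeff_X_add_one_pow]
  -- decreasing part
  have hdec : ∀ j : ℕ, n ≤ 2 * j + 1 →
      (P.comp (X + 1)).coeff (j + 1) ≤ (P.comp (X + 1)).coeff j := by
    intro j hjn
    rw [hcoeff, hcoeff]
    apply Finset.sum_le_sum
    intro i hi
    simp only [Finset.mem_range] at hi
    have ha : 0 ≤ P.coeff i := (hpos i (by omega)).le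
    have hc : i.choose (j + 1) ≤ i.choose j := bm_choose_dec (by omega)
    have hc' : (i.choose (j + 1) : ℝ) ≤ i.choose j := by exact_mod_cast hc
    exact mul_le_mul_of_nonneg_left hc' ha
  -- increasing part
  have hinc : ∀ j : ℕ, 2 * j + 2 ≤ n →
      (P.comp (X + 1)).coeff j ≤ (P.comp (X + 1)).coeff (j + 1) := by
    intro j hjn
    rw [hcoeff, hcoeff, ← sub_nonneg, ← Finset.sum_sub_distrib]
    have hterm : ∀ k ∈ Finset.range (n + 1),
        P.coeff k * (k.choose (j + 1) : ℝ) - P.coeff k * (k.choose j : ℝ)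
          = ∑ m ∈ Finset.range (n + 1),
              (if m ≤ k then
                (if m = 0 then P.coeff 0 else P.coeff m - P.coeff (m - 1))
                  * ((k.choose (j + 1) : ℝ) - k.choose j)
               else 0) := by
      intro k hk
      simp only [Finset.mem_range] at hk
      rw [← Finset.sum_filter]
      have hfil : (Finset.range (n + 1)).filter (· ≤ k) = Finset.range (k + 1) := by
        ext x
        simp only [Finset.mem_filter, Finset.mem_range]
        omega
      rw [hfil, ← Finset.sum_mul, ← mul_sub]
      congr 1
      exact (bm_tel P.coeff k).symm
    rw [Finset.sum_congr rfl hterm, Finset.sum_comm]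
    apply Finset.sum_nonneg
    intro m hm
    simp only [Finset.mem_range] at hm
    have hIcc : ∀ k ∈ Finset.range (n + 1),
        (if m ≤ k then
          (if m = 0 then P.coeff 0 else P.coeff m - P.coeff (m - 1))
            * ((k.choose (j + 1) : ℝ) - k.choose j)
         else 0)
        = (if m = 0 then P.coeff 0 else P.coeff m - P.coeff (m - 1))
            * (if k ∈ Finset.Icc m n then ((k.choose (j + 1) : ℝ) - k.choose j) else 0) := by
      intro k hk
      simp only [Finset.mem_range] at hk
      by_cases h : m ≤ k
      · rw [if_pos h, if_pos (Finset.mem_Icc.mpr ⟨h, by omega⟩)]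
      · rw [if_neg h, if_neg (show k ∉ Finset.Icc m n by rw [Finset.mem_Icc]; omega), mul_zero]
    rw [Finset.sum_congr rfl hIcc, ← Finset.mul_sum]
    have hb : 0 ≤ if m = 0 then P.coeff 0 else P.coeff m - P.coeff (m - 1) := by
      by_cases h : m = 0
      · rw [if_pos h]; exact (hpos 0 (by omega)).le
      · rw [if_neg h]
        have := hmono (m - 1) (by omega)
        have hm1 : m - 1 + 1 = m := by omega
        rw [hm1] at this
        linarith
    have hS : 0 ≤ ∑ k ∈ Finset.range (n + 1),
        (if k ∈ Finset.Icc m n then ((k.choose (j + 1) : ℝ) - k.choose j) else 0) := by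
      rw [Finset.sum_ite_mem]
      have : Finset.range (n + 1) ∩ Finset.Icc m n = Finset.Icc m n := by
        ext x; simp only [Finset.mem_inter, Finset.mem_Icc, Finset.mem_range]; omega
      rw [this]
      exact bm_key hjn m
    exact mul_nonneg hb hS
  refine ⟨n / 2, ?_, ?_⟩
  · intro i hi
    exact hinc i (by omega)
  · intro i hi
    exact hdec i (by omega)
end

section
/- For positive integers n_1 ≥ n_2 ≥ 1, the polynomial (1+x)^{n_1} + (1+x)^{n_2} − 1, which equals the independence polynomial of the complete bipartite graph K_{n_1,n_2}, has a log-concave coefficient sequence. -/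
open Polynomial

/-- Log-concavity of a single row of binomial coefficients. -/
lemma nat_choose_lc (n k : ℕ) : n.choose k * n.choose (k + 2) ≤ n.choose (k + 1) ^ 2 := by
  rcases le_or_gt n (k + 1) with hle | hlt
  · rcases Nat.lt_or_ge n (k + 2) with h2 | h2
    · simp [Nat.choose_eq_zero_of_lt h2]
    · omega
  · -- k + 2 ≤ n, all terms positive
    have h1 : n.choose (k + 1) * (k + 1) = n.choose k * (n - k) := Nat.choose_succ_right_eq n k
    have h2 : n.choose (k + 2) * (k + 2) = n.choose (k + 1) * (n - (k + 1)) :=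
      Nat.choose_succ_right_eq n (k + 1)
    have key : n.choose k * n.choose (k + 2) * ((k + 2) * (n - k)) ≤
        n.choose (k + 1) ^ 2 * ((k + 2) * (n - k)) := by
      have e1 : n.choose k * n.choose (k + 2) * ((k + 2) * (n - k)) =
          (n.choose (k + 1) * (n - (k + 1))) * (n.choose k * (n - k)) := by rw [← h2]; ring
      have e2 : (n.choose (k + 1) * (n - (k + 1))) * (n.choose k * (n - k)) =
          n.choose (k + 1) ^ 2 * ((k + 1) * (n - (k + 1))) := by rw [← h1]; ring
      rw [e1, e2]
      have : (k + 1) * (n - (k + 1)) ≤ (k + 2) * (n - k) :=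
        Nat.mul_le_mul (by omega) (by omega)
      exact Nat.mul_le_mul_left _ this
    have hpos : 0 < (k + 2) * (n - k) := by
      have : 0 < n - k := by omega
      positivity
    exact Nat.le_of_mul_le_mul_right key hpos

/-- From log-concavity, nonnegativity and no internal zeros we get the
"two-apart" inequality. -/
lemma gap2 {u : ℕ → ℝ} (hpos : ∀ k, 0 ≤ u k)
    (hlc : ∀ k, u k * u (k + 2) ≤ u (k + 1) ^ 2)
    (hsup : ∀ k, u (k + 1) ≠ 0 → u k ≠ 0) (k : ℕ) :
    u k * u (k + 3) ≤ u (k + 1) * u (k + 2) := by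
  rcases eq_or_lt_of_le (hpos (k + 2)) with h2 | h2
  · have h3 : u (k + 3) = 0 := by
      by_contra h
      exact (hsup (k + 2) h) h2.symm
    rw [h3, mul_zero]
    exact mul_nonneg (hpos _) (hpos _)
  · have h1 : 0 < u (k + 1) := by
      rcases eq_or_lt_of_le (hpos (k + 1)) with h1 | h1
      · exact absurd h1.symm (hsup (k + 1) (ne_of_gt h2))
      · exact h1
    -- multiply the two log-concavity inequalities
    have A := hlc k
    have B := hlc (k + 1)
    have prod : (u k * u (k + 2)) * (u (k + 1) * u (k + 3)) ≤
        (u (k + 1) ^ 2) * (u (k + 2) ^ 2) :=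
      mul_le_mul A B (mul_nonneg (hpos _) (hpos _)) (by positivity)
    have hmul : 0 < u (k + 1) * u (k + 2) := mul_pos h1 h2
    nlinarith [mul_nonneg (hpos k) (hpos (k + 3))]

/-- The coefficient sequence of `(1+x)^n + (1+x)^p`. -/
noncomputable def bb (n p k : ℕ) : ℝ := (n.choose k : ℝ) + (p.choose k : ℝ)

lemma bb_nonneg (n p k : ℕ) : 0 ≤ bb n p k := by
  unfold bb; positivity

lemma bb_sup (n p : ℕ) (h : p ≤ n) (k : ℕ) (hk : bb n p (k + 1) ≠ 0) : bb n p k ≠ 0 := by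
  unfold bb at *
  have : k + 1 ≤ n := by
    by_contra hc
    push_neg at hc
    rw [Nat.choose_eq_zero_of_lt hc, Nat.choose_eq_zero_of_lt (by omega)] at hk
    simp at hk
  have : 0 < n.choose k := Nat.choose_pos (by omega)
  have : (0 : ℝ) < n.choose k := by exact_mod_cast this
  have hp : (0 : ℝ) ≤ p.choose k := by positivity
  nlinarith

lemma bb_lc (p : ℕ) : ∀ n, p ≤ n → ∀ k, bb n p k * bb n p (k + 2) ≤ bb n p (k + 1) ^ 2 := by
  induction p with
  | zero =>
      intro n _ k
      unfold bb
      cases k with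
      | zero =>
          simp only [zero_add, Nat.choose_zero_right, Nat.choose_zero_succ, Nat.cast_one,
            Nat.cast_zero]
          have h1 : n.choose 2 * 2 = n.choose 1 * (n - 1) := Nat.choose_succ_right_eq n 1
          have h2 : n.choose 2 * 2 ≤ n.choose 1 * n := by
            rw [h1]; exact Nat.mul_le_mul_left _ (Nat.sub_le n 1)
          have h2' : (n.choose 2 : ℝ) * 2 ≤ (n.choose 1 : ℝ) * n := by exact_mod_cast h2
          simp only [Nat.choose_one_right] at h2' ⊢
          nlinarith
      | succ j =>
          simp only [Nat.choose_zero_succ, Nat.cast_zero, add_zero]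
          have := nat_choose_lc n (j + 1)
          have : (n.choose (j+1) : ℝ) * n.choose (j + 3) ≤ (n.choose (j + 2) : ℝ) ^ 2 := by
            exact_mod_cast this
          convert this using 2 <;> ring
  | succ p ih =>
      intro n hn k
      obtain ⟨m, rfl⟩ : ∃ m, n = m + 1 := ⟨n - 1, by omega⟩
      have hm : p ≤ m := by omega
      have key : ∀ j, bb (m + 1) (p + 1) (j + 1) = bb m p (j + 1) + bb m p j := by
        intro j
        unfold bb
        rw [Nat.choose_succ_succ m j, Nat.choose_succ_succ p j]
        push_cast
        ring
      have hpos := bb_nonneg m p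
      have hlc := ih m hm
      have hsup := bb_sup m p hm
      cases k with
      | zero =>
          have h0 : bb (m + 1) (p + 1) 0 = bb m p 0 := by unfold bb; simp
          rw [h0, key 0, key 1]
          have A := hlc 0
          nlinarith [hpos 0, hpos 1, hpos 2, mul_nonneg (hpos 0) (hpos 1)]
      | succ j =>
          rw [key j, key (j + 1), key (j + 2)]
          have A := hlc j
          have B := hlc (j + 1)
          have C := gap2 hpos hlc hsup j
          nlinarith [mul_nonneg (hpos (j + 1)) (hpos (j + 2))]

/-- The independence polynomial of the complete bipartite graph `K_{n₁,n₂}` is log-concave. -/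
theorem stmt8 (n₁ n₂ : ℕ) (h₂ : 1 ≤ n₂) (h : n₂ ≤ n₁) :
    PolyLogConcave ((1 + X) ^ n₁ + (1 + X) ^ n₂ - 1) := by
  intro k hk
  have hc : ∀ j : ℕ, ((1 + X : ℝ[X]) ^ n₁ + (1 + X) ^ n₂ - 1).coeff j =
      bb n₁ n₂ j - (if j = 0 then (1 : ℝ) else 0) := by
    intro j
    rw [coeff_sub, coeff_add, coeff_one_add_X_pow, coeff_one_add_X_pow, Polynomial.coeff_one]
    unfold bb
    rfl
  obtain ⟨j, rfl⟩ : ∃ j, k = j + 1 := ⟨k - 1, by omega⟩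
  simp only [Nat.add_sub_cancel]
  rw [hc j, hc (j + 1), hc (j + 2)]
  have hlc := bb_lc n₂ n₁ h
  cases j with
  | zero =>
      norm_num
      have A := hlc 0
      have h0 : bb n₁ n₂ 0 = 2 := by norm_num [bb]
      have h2 : 0 ≤ bb n₁ n₂ 2 := bb_nonneg n₁ n₂ 2
      rw [h0] at A
      nlinarith
  | succ i =>
      simp only [if_neg (Nat.succ_ne_zero i), if_neg (Nat.succ_ne_zero (i + 1)),
        if_neg (Nat.succ_ne_zero (i + 2)), sub_zero]
      exact hlc (i + 1)
end

section
/- Define polynomials Q_n(x) by Q_{-1}(x) = 1, Q_0(x) = 1 + x, and Q_n(x) = (x+1)·Q_{n-1}(x) + x·Q_{n-2}(x) for n ≥ 1. Then for every n ≥ 0, Q_n(x) has only real zeros. -/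
/-!
Let `α, β` be the roots of `t² - (z + 1) t - z`. Then `Q_n(z)` satisfies the same recurrence as
`(α^(n+2) - β^(n+2)) / (α - β)`, so at a nonzero root `z` of `Q_n` the ratio `ω = α / β` is a root
of unity. Vieta's formulas turn this into `z² + (ω + 4 + ω⁻¹) z + 1 = 0`, a real quadratic whose
middle coefficient `4 + 2 Re ω ≥ 2` makes its discriminant nonnegative.
-/

open Polynomial

/-- `Q (n+1)` is the polynomial `Q_n` of the paper; `Q 0 = Q_{-1} = 1`. -/
noncomputable def Q : ℕ → Polynomial ℝ
  | 0 => 1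
  | 1 => 1 + X
  | (n + 2) => (X + 1) * Q (n + 1) + X * Q n

theorem Complex.exists_add_eq_and_mul_eq (s p : ℂ) : ∃ α β : ℂ, α + β = s ∧ α * β = p := by
  obtain ⟨d, hd⟩ := IsAlgClosed.exists_pow_nat_eq (s ^ 2 - 4 * p) (n := 2) two_pos
  exact ⟨(s + d) / 2, (s - d) / 2, by ring, by linear_combination (-1 / 4 : ℂ) * hd⟩

theorem aeval_Q_mul_sub {A : Type*} [CommRing A] [Algebra ℝ A] {z α β : A}
    (hadd : α + β = z + 1) (hmul : α * β = -z) (m : ℕ) :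
    aeval z (Q m) * (α - β) = α ^ (m + 1) - β ^ (m + 1) := by
  induction m using Nat.twoStepInduction with
  | zero => simp [Q]
  | one =>
    simp only [Q, map_add, map_one, aeval_X]
    linear_combination (β - α) * hadd
  | more m ih ih' =>
    simp only [Q, map_add, map_mul, map_one, aeval_X]
    linear_combination (z + 1) * ih' + z * ih - (α ^ (m + 2) - β ^ (m + 2)) * hadd
      + (α ^ (m + 1) - β ^ (m + 1)) * hmul

theorem Complex.sq_add_mul_add_one_eq_zero_of_vieta {z α β : ℂ} (hz : z ≠ 0)
    (hadd : α + β = z + 1) (hmul : α * β = -z) :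
    z ^ 2 + (α / β + 4 + (α / β)⁻¹) * z + 1 = 0 := by
  have hαβ : α * β ≠ 0 := by rwa [hmul, neg_ne_zero]
  have hα : α ≠ 0 := left_ne_zero_of_mul hαβ
  have hβ : β ≠ 0 := right_ne_zero_of_mul hαβ
  field_simp
  linear_combination (z ^ 2 + 2 * z + 1) * hmul + z * (α + β + z + 1) * hadd

theorem Complex.im_eq_zero_of_sq_add_mul_add_one_eq_zero {c : ℝ} (hc : 4 ≤ c ^ 2) {z : ℂ}
    (h : z ^ 2 + c * z + 1 = 0) : z.im = 0 := by
  have hre : z.re ^ 2 - z.im ^ 2 + c * z.re + 1 = 0 := by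
    simpa [sq] using congrArg Complex.re h
  have him : z.im * (2 * z.re + c) = 0 := by
    have h' := congrArg Complex.im h
    simp only [sq, Complex.add_im, Complex.mul_im, Complex.ofReal_re, Complex.ofReal_im, zero_mul,
      add_zero, Complex.one_im, Complex.zero_im] at h'
    linear_combination h'
  by_contra hne
  have hsum : 2 * z.re + c = 0 := (mul_eq_zero.mp him).resolve_left hne
  nlinarith [sq_pos_of_ne_zero hne]

theorem Complex.im_eq_zero_of_sq_add_mul_add_one_eq_zero_of_norm_eq_one {ω z : ℂ} (hω : ‖ω‖ = 1)
    (h : z ^ 2 + (ω + 4 + ω⁻¹) * z + 1 = 0) : z.im = 0 := by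
  have hc : ω + 4 + ω⁻¹ = ((2 * ω.re + 4 : ℝ) : ℂ) := by
    rw [Complex.inv_eq_conj hω, add_right_comm, Complex.add_conj]
    push_cast
    ring
  have hre : -1 ≤ ω.re := by
    simpa [hω] using neg_le_of_abs_le (Complex.abs_re_le_norm ω)
  rw [hc] at h
  exact Complex.im_eq_zero_of_sq_add_mul_add_one_eq_zero (by nlinarith) h

/-- For every `n ≥ 0`, the polynomial `Q_n` has only real zeros. -/
theorem stmt13 (n : ℕ) (z : ℂ) (hz : Polynomial.aeval z (Q (n + 1)) = 0) : z.im = 0 := by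
  rcases eq_or_ne z 0 with rfl | hz0
  · rfl
  obtain ⟨α, β, hadd, hmul⟩ := Complex.exists_add_eq_and_mul_eq (z + 1) (-z)
  have hβ : β ≠ 0 := by
    rintro rfl
    exact hz0 (by simpa using hmul.symm)
  have hroot : (α / β) ^ (n + 2) = 1 := by
    rw [div_pow, div_eq_one_iff_eq (pow_ne_zero _ hβ), ← sub_eq_zero,
      ← aeval_Q_mul_sub hadd hmul, hz, zero_mul]
  exact Complex.im_eq_zero_of_sq_add_mul_add_one_eq_zero_of_norm_eq_one
    (Complex.norm_eq_one_of_pow_eq_one hroot (by omega))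
    (Complex.sq_add_mul_add_one_eq_zero_of_vieta hz0 hadd hmul)
end

section
/- Define polynomials Q_n(x) by Q_{-1}(x) = 1, Q_0(x) = 1 + x, and Q_n(x) = (x+1)·Q_{n-1}(x) + x·Q_{n-2}(x) for n ≥ 1. Then Q_n has degree n+1 and is symmetric (palindromic): x^{n+1}·Q_n(1/x) = Q_n(x) as rational functions, i.e., the coefficient of x^k in Q_n equals the coefficient of x^{n+1-k} for all 0 ≤ k ≤ n+1. -/
open Polynomial

lemma Q_prop (n : ℕ) : Q n ≠ 0 ∧ (Q n).natDegree = n ∧ reflect n (Q n) = Q n := by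
  induction n using Nat.twoStepInduction with
  | zero => refine ⟨one_ne_zero, ?_, ?_⟩ <;> simp [Q]
  | one =>
      refine ⟨?_, ?_, ?_⟩
      · simp only [Q]
        intro h
        have := congrArg (fun p => coeff p 0) h
        simp at this
      · simp only [Q]
        rw [add_comm]
        compute_degree!
      · simp only [Q, reflect_add, reflect_one, reflect_one_X]
        ring
  | more n ih1 ih2 =>
      obtain ⟨h0, hd, hr⟩ := ih1
      obtain ⟨h0', hd', hr'⟩ := ih2
      have hx1 : ((X : ℝ[X]) + 1) ≠ 0 := by
        intro h
        have := congrArg (fun p => coeff p 0) h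
        simp at this
      have hXd : ((X : ℝ[X]) + 1).natDegree = 1 := by
        simpa using natDegree_X_add_C (1 : ℝ)
      have hdm : ((X + 1) * Q (n + 1)).natDegree = n + 2 := by
        rw [natDegree_mul hx1 h0', hd', hXd]; omega
      have hdm2 : ((X : ℝ[X]) * Q n).natDegree = n + 1 := by
        rw [natDegree_mul X_ne_zero h0, hd, natDegree_X]; omega
      have hdeg : (Q (n + 2)).natDegree = n + 2 := by
        show ((X + 1) * Q (n + 1) + X * Q n).natDegree = n + 2
        rw [natDegree_add_eq_left_of_natDegree_lt, hdm]
        rw [hdm, hdm2]; omega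
      refine ⟨?_, hdeg, ?_⟩
      · intro h; rw [h] at hdeg; simp at hdeg
      · show reflect (n + 2) ((X + 1) * Q (n + 1) + X * Q n) = (X + 1) * Q (n + 1) + X * Q n
        rw [reflect_add]
        have e1 : reflect (n + 2) ((X + 1) * Q (n + 1))
            = reflect 1 (X + 1) * reflect (n + 1) (Q (n + 1)) := by
          have := reflect_mul (X + 1 : ℝ[X]) (Q (n + 1)) (F := 1) (G := n + 1)
            (le_of_eq hXd) (le_of_eq hd')
          rw [← this]; ring_nf
        have e2 : reflect (n + 2) ((X : ℝ[X]) * Q n)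
            = reflect 2 X * reflect n (Q n) := by
          have := reflect_mul (X : ℝ[X]) (Q n) (F := 2) (G := n)
            (by simp : (X:ℝ[X]).natDegree ≤ 2) (le_of_eq hd)
          rw [← this]; ring_nf
        have r1 : reflect 1 ((X : ℝ[X]) + 1) = X + 1 := by
          rw [reflect_add, reflect_one, reflect_one_X]; ring
        have r2 : reflect 2 (X : ℝ[X]) = X := by
          have := reflect_monomial 2 1 (R := ℝ)
          simpa using this
        rw [e1, e2, r1, r2, hr, hr']

/-- `Q_n` has degree `n+1` and is palindromic. -/
theorem stmt14 (n : ℕ) :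
    (Q (n + 1)).natDegree = n + 1 ∧
    ∀ k ≤ n + 1, (Q (n + 1)).coeff k = (Q (n + 1)).coeff (n + 1 - k) := by
  obtain ⟨h0, hd, hr⟩ := Q_prop (n + 1)
  refine ⟨hd, fun k hk => ?_⟩
  conv_lhs => rw [← hr]
  rw [coeff_reflect, revAt_le hk]
end

section
/- Let G be a graph of order n, let H be a graph with a distinguished root vertex v, and let G∘̄H be the rooted product (take n disjoint copies of H and identify the root of the i-th copy with the i-th vertex of G). Then the independence polynomials satisfy I(G∘̄H; x) = I(H−v; x)^n · I(G; x·I(H−N[v]; x)/I(H−v; x)), where N[v] is the closed neighborhood of v. -/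
open Polynomial Finset
open scoped Classical

/-- The independence polynomial of a finite simple graph. -/
noncomputable def indepPoly {V : Type*} [Fintype V] (G : SimpleGraph V) : Polynomial ℝ :=
  ∑ s ∈ Finset.univ.filter (fun s : Finset V => ∀ u ∈ s, ∀ v ∈ s, ¬ G.Adj u v),
    X ^ s.card

/-- The rooted product `G∘̄H` with respect to the root `v` of `H`: take a copy of `H`
for every vertex of `G` and identify the root of each copy with that vertex of `G`. -/
def rootedProd {α β : Type*} (G : SimpleGraph α) (H : SimpleGraph β) (v : β) :
    SimpleGraph (α × β) where
  Adj p q := (p.1 = q.1 ∧ H.Adj p.2 q.2) ∨ (p.2 = v ∧ q.2 = v ∧ G.Adj p.1 q.1)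
  symm := by
    constructor
    intro p q h
    rcases h with ⟨h1, h2⟩ | ⟨h1, h2, h3⟩
    · exact Or.inl ⟨h1.symm, h2.symm⟩
    · exact Or.inr ⟨h2, h1, h3.symm⟩
  loopless := by
    constructor
    intro p h
    rcases h with ⟨_, h2⟩ | ⟨_, _, h3⟩
    · exact H.irrefl h2
    · exact G.irrefl h3

/-!
An independent set of `G∘̄H` is the same as a choice, for every vertex `a` of `G`, of an
independent set `T_a` in the `a`-th copy of `H`, subject only to the condition that the vertices
`a` with `v ∈ T_a` form an independent set `s` of `G`. Once `s` is fixed the choices are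
independent: for `a ∈ s`, `T_a` is `v` together with an independent set of `H − N[v]`
(weight `x · I(H − N[v])`), and for `a ∉ s` it is an independent set of `H − v` (weight
`I(H − v)`). Summing over `s` and grouping by `|s|` gives the formula.
-/

lemma Finset.prod_ite_mem_const {α M : Type*} [Fintype α] [CommMonoid M] (s : Finset α)
    (a b : M) :
    ∏ i, (if i ∈ s then a else b) = a ^ #s * b ^ (Fintype.card α - #s) := by
  simp [prod_ite, ← card_compl, ← compl_filter]

namespace SimpleGraph

variable {V : Type*} [Fintype V]

noncomputable def indepFinsets (G : SimpleGraph V) : Finset (Finset V) :=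
  univ.filter fun s => ∀ u ∈ s, ∀ w ∈ s, ¬ G.Adj u w

lemma mem_indepFinsets {G : SimpleGraph V} {s : Finset V} :
    s ∈ G.indepFinsets ↔ ∀ u ∈ s, ∀ w ∈ s, ¬ G.Adj u w := by
  simp [indepFinsets]

end SimpleGraph

open SimpleGraph

section IndepPoly

variable {V : Type*} [Fintype V]

lemma indepPoly_eq_sum_indepFinsets (G : SimpleGraph V) :
    indepPoly G = ∑ s ∈ G.indepFinsets, X ^ #s := rfl

lemma coeff_indepPoly (G : SimpleGraph V) (k : ℕ) :
    (indepPoly G).coeff k = #{s ∈ G.indepFinsets | #s = k} := by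
  simp [indepPoly_eq_sum_indepFinsets, finsetSum_coeff, coeff_X_pow, eq_comm]

lemma sum_indepFinsets_comp_card (G : SimpleGraph V) (f : ℕ → ℝ[X]) :
    ∑ s ∈ G.indepFinsets, f #s =
      ∑ k ∈ range (Fintype.card V + 1), C ((indepPoly G).coeff k) * f k := by
  rw [← sum_fiberwise_of_maps_to (g := card) (t := range (Fintype.card V + 1))
    fun s _ => mem_range_succ_iff.2 (card_le_univ s)]
  refine sum_congr rfl fun k _ => ?_
  rw [sum_congr rfl fun s hs => by rw [(mem_filter.1 hs).2], sum_const, coeff_indepPoly,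
    map_natCast, nsmul_eq_mul]

lemma indepPoly_induce (G : SimpleGraph V) (s : Set V) [Fintype s] :
    indepPoly (G.induce s) = ∑ t ∈ G.indepFinsets with ↑t ⊆ s, X ^ #t := by
  rw [indepPoly_eq_sum_indepFinsets]
  refine sum_bij (fun t _ => t.map (Function.Embedding.subtype _)) ?_ ?_ ?_ ?_
  · intro t ht
    simp_all [mem_indepFinsets, Set.subset_def]
  · intro t _ t' _ h
    exact map_injective _ h
  · intro t ht
    simp only [mem_filter, mem_indepFinsets] at ht
    refine ⟨t.subtype (· ∈ s), ?_, subtype_map_of_mem fun x hx => ht.2 hx⟩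
    simp only [mem_indepFinsets, mem_subtype]
    exact fun u hu w hw => ht.1 _ hu _ hw
  · intro t _
    rw [card_map]

lemma sum_indepFinsets_filter_notMem (G : SimpleGraph V) (v : V) :
    ∑ t ∈ G.indepFinsets with v ∉ t, X ^ #t = indepPoly (G.induce {u | u ≠ v}) := by
  rw [indepPoly_induce]
  refine sum_congr (filter_congr fun t _ => ?_) fun _ _ => rfl
  simp [Set.subset_def]

lemma sum_indepFinsets_filter_mem (G : SimpleGraph V) (v : V) :
    ∑ t ∈ G.indepFinsets with v ∈ t, X ^ #t =
      X * indepPoly (G.induce {u | u ≠ v ∧ ¬ G.Adj v u}) := by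
  rw [indepPoly_induce, mul_sum]
  symm
  refine sum_nbij' (insert v) (fun t => t.erase v) ?_ ?_ ?_ ?_ ?_
  · intro t ht
    simp only [mem_filter, mem_indepFinsets, Set.subset_def, mem_coe] at ht ⊢
    refine ⟨?_, mem_insert_self v t⟩
    simp only [mem_insert, forall_eq_or_imp]
    exact ⟨⟨G.irrefl, fun u hu => (ht.2 u hu).2⟩,
      fun u hu => ⟨fun h => (ht.2 u hu).2 h.symm, ht.1 u hu⟩⟩
  · intro t ht
    simp only [mem_filter, mem_indepFinsets, Set.subset_def, mem_coe, mem_erase] at ht ⊢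
    exact ⟨fun u hu w hw => ht.1 u hu.2 w hw.2, fun u hu => ⟨hu.1, ht.1 v ht.2 u hu.2⟩⟩
  · intro t ht
    simp only [mem_filter, mem_indepFinsets, Set.subset_def, mem_coe] at ht
    exact erase_insert fun hv => (ht.2 v hv).1 rfl
  · intro t ht
    exact insert_erase (mem_filter.1 ht).2
  · intro t ht
    simp only [mem_filter, mem_indepFinsets, Set.subset_def, mem_coe] at ht
    rw [card_insert_of_notMem fun hv => (ht.2 v hv).1 rfl, pow_succ']

end IndepPoly

section RootedProduct

variable {α β : Type*} [Fintype α] [Fintype β]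

noncomputable def finsetProdEquivPi : Finset (α × β) ≃ (α → Finset β) where
  toFun S a := {b | (a, b) ∈ S}
  invFun g := {p | p.2 ∈ g p.1}
  left_inv S := by ext; simp
  right_inv g := by ext; simp

lemma card_finsetProdEquivPi_symm (g : α → Finset β) :
    #(finsetProdEquivPi.symm g) = ∑ a, #(g a) := by
  simp only [finsetProdEquivPi, Equiv.coe_fn_symm_mk]
  rw [card_filter, Fintype.sum_prod_type]
  simp

lemma finsetProdEquivPi_symm_mem_indepFinsets {G : SimpleGraph α} {H : SimpleGraph β} {v : β}
    {g : α → Finset β} :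
    finsetProdEquivPi.symm g ∈ (rootedProd G H v).indepFinsets ↔
      (∀ a, g a ∈ H.indepFinsets) ∧ ({a | v ∈ g a} : Finset α) ∈ G.indepFinsets := by
  simp only [finsetProdEquivPi, Equiv.coe_fn_symm_mk, mem_indepFinsets, mem_filter, mem_univ,
    true_and, rootedProd, Prod.forall, not_or, not_and]
  constructor
  · intro h
    exact ⟨fun a u hu w hw => (h a u hu a w hw).1 rfl,
      fun a ha b hb => (h a v ha b v hb).2 rfl rfl⟩
  · rintro ⟨hH, hG⟩ a u hu b w hw
    refine ⟨?_, ?_⟩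
    · rintro rfl
      exact hH a u hu w hw
    · rintro rfl rfl
      exact hG a hu b hw

lemma indepPoly_rootedProd_eq_sum_pi (G : SimpleGraph α) (H : SimpleGraph β) (v : β) :
    indepPoly (rootedProd G H v) =
      ∑ g : α → Finset β with
          (∀ a, g a ∈ H.indepFinsets) ∧ ({a | v ∈ g a} : Finset α) ∈ G.indepFinsets,
        ∏ a, X ^ #(g a) := by
  rw [indepPoly_eq_sum_indepFinsets]
  refine sum_equiv finsetProdEquivPi (fun S => ?_) fun S _ => ?_
  · rw [mem_filter_univ, ← finsetProdEquivPi_symm_mem_indepFinsets, Equiv.symm_apply_apply]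
  · rw [prod_pow_eq_pow_sum, ← card_finsetProdEquivPi_symm, Equiv.symm_apply_apply]

lemma mem_piFinset_filter_indepFinsets_iff {H : SimpleGraph β} {v : β} {s : Finset α}
    {g : α → Finset β} :
    (g ∈ Fintype.piFinset fun a =>
        if a ∈ s then {t ∈ H.indepFinsets | v ∈ t} else {t ∈ H.indepFinsets | v ∉ t}) ↔
      (∀ a, g a ∈ H.indepFinsets) ∧ ({a | v ∈ g a} : Finset α) = s := by
  have hmem : ∀ a, (g a ∈ if a ∈ s then {t ∈ H.indepFinsets | v ∈ t}
      else {t ∈ H.indepFinsets | v ∉ t}) ↔ g a ∈ H.indepFinsets ∧ (v ∈ g a ↔ a ∈ s) := by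
    intro a
    split_ifs with ha <;> simp [mem_filter, ha]
  simp only [Fintype.mem_piFinset, hmem, forall_and, Finset.ext_iff, mem_filter_univ]

lemma indepPoly_rootedProd (G : SimpleGraph α) (H : SimpleGraph β) (v : β) :
    indepPoly (rootedProd G H v) = ∑ s ∈ G.indepFinsets,
      (X * indepPoly (H.induce {u | u ≠ v ∧ ¬ H.Adj v u})) ^ #s *
        indepPoly (H.induce {u | u ≠ v}) ^ (Fintype.card α - #s) := by
  rw [indepPoly_rootedProd_eq_sum_pi, ← sum_fiberwise_of_maps_to
    (g := fun g => ({a | v ∈ g a} : Finset α)) fun g hg => ((mem_filter_univ _).1 hg).2]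
  refine sum_congr rfl fun s hs => ?_
  calc _ = ∑ g ∈ Fintype.piFinset (fun a =>
          if a ∈ s then {t ∈ H.indepFinsets | v ∈ t} else {t ∈ H.indepFinsets | v ∉ t}),
            ∏ a, X ^ #(g a) := by
        refine sum_congr (ext fun g => ?_) fun _ _ => rfl
        rw [mem_piFinset_filter_indepFinsets_iff, mem_filter, mem_filter_univ]
        exact ⟨fun h => ⟨h.1.1, h.2⟩, fun h => ⟨⟨h.1, h.2 ▸ hs⟩, h.2⟩⟩
    _ = ∏ a, ∑ t ∈ (if a ∈ s then {t ∈ H.indepFinsets | v ∈ t}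
          else {t ∈ H.indepFinsets | v ∉ t}), X ^ #t := by
        rw [prod_univ_sum]
    _ = ∏ a, if a ∈ s then X * indepPoly (H.induce {u | u ≠ v ∧ ¬ H.Adj v u})
          else indepPoly (H.induce {u | u ≠ v}) := by
        refine prod_congr rfl fun a _ => ?_
        split_ifs
        · exact sum_indepFinsets_filter_mem H v
        · exact sum_indepFinsets_filter_notMem H v
    _ = _ := prod_ite_mem_const _ _ _

end RootedProduct

/-- `I(G∘̄H;x) = I(H−v;x)^n · I(G; x·I(H−N[v];x)/I(H−v;x))`, stated after clearing
denominators: `I(G∘̄H;x) = Σ_k a_k x^k I(H−N[v];x)^k I(H−v;x)^{n−k}` where the `a_k`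
are the coefficients of `I(G;x)` and `n = |V(G)|`. -/
theorem stmt17 {α β : Type*} [Fintype α] [Fintype β]
    (G : SimpleGraph α) (H : SimpleGraph β) (v : β) :
    indepPoly (rootedProd G H v) =
      ∑ k ∈ Finset.range (Fintype.card α + 1),
        C ((indepPoly G).coeff k) * X ^ k *
          (indepPoly (H.induce {u : β | u ≠ v ∧ ¬ H.Adj v u})) ^ k *
          (indepPoly (H.induce {u : β | u ≠ v})) ^ (Fintype.card α - k) := by
  rw [indepPoly_rootedProd, sum_indepFinsets_comp_card G fun k =>
    (X * indepPoly (H.induce {u | u ≠ v ∧ ¬ H.Adj v u})) ^ k *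
      indepPoly (H.induce {u | u ≠ v}) ^ (Fintype.card α - k)]
  exact sum_congr rfl fun k _ => by ring
end

section
/- For any two finite simple graphs G₁ and G₂, the independence polynomial of the lexicographic product G₁[G₂] satisfies I(G₁[G₂]; x) = I(G₁; I(G₂; x) − 1). -/
open Polynomial Finset
open scoped Classical

/-- The lexicographic product `G₁[G₂]`. -/
def lexProd {V₁ V₂ : Type*} (G₁ : SimpleGraph V₁) (G₂ : SimpleGraph V₂) :
    SimpleGraph (V₁ × V₂) where
  Adj p q := G₁.Adj p.1 q.1 ∨ (p.1 = q.1 ∧ G₂.Adj p.2 q.2)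
  symm := by
    refine ⟨?_⟩
    intro p q h
    rcases h with h | ⟨h1, h2⟩
    · exact Or.inl h.symm
    · exact Or.inr ⟨h1.symm, h2.symm⟩
  loopless := by
    refine ⟨?_⟩
    intro p h
    rcases h with h | ⟨_, h2⟩
    · exact G₁.irrefl h
    · exact G₂.irrefl h2

/-!
An independent set `T` of `G₁[G₂]` is the same thing as an independent set `S` of `G₁` together
with a nonempty independent set of `G₂` (the fibre of `T`) over each vertex of `S`. Since
`x ^ #T` is the product of `x ^ #(fibre)`, the sets over a fixed `S` contribute
`(I(G₂; x) - 1) ^ #S`.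
-/

theorem filter_piFinset_support_eq {ι β : Type*} [Fintype ι] [DecidableEq β] {A : Finset β}
    {b : β} (hb : b ∉ A) (S : Finset ι) :
    (Fintype.piFinset fun _ => insert b A).filter (fun f => ({i | f i ≠ b} : Finset ι) = S) =
      Fintype.piFinset fun i => if i ∈ S then A else {b} := by
  ext f
  simp only [mem_filter, Fintype.mem_piFinset, mem_insert]
  constructor
  · rintro ⟨hf, rfl⟩ i
    by_cases hi : f i = b
    · simp [hi]
    · simpa [hi] using hf i
  · intro hf
    refine ⟨fun i => ?_, ?_⟩
    · have := hf i
      split_ifs at this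
      · exact Or.inr this
      · exact Or.inl (mem_singleton.1 this)
    · ext i
      have := hf i
      split_ifs at this with hi
      · simpa [hi] using ne_of_mem_of_not_mem this hb
      · simpa [hi] using this

theorem sum_piFinset_filter_support_prod_eq_sum_pow {ι β R : Type*} [Fintype ι] [DecidableEq β]
    [CommSemiring R] (A : Finset β) {b : β} (hb : b ∉ A) (w : β → R) (hw : w b = 1)
    (P : Finset ι → Prop) [DecidablePred P] :
    ∑ f ∈ (Fintype.piFinset fun _ => insert b A) with P {i | f i ≠ b}, ∏ i, w (f i)
      = ∑ S with P S, (∑ t ∈ A, w t) ^ #S := by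
  rw [← sum_fiberwise_of_maps_to (g := fun f : ι → β => ({i | f i ≠ b} : Finset ι))
    (t := univ.filter P) (fun f hf => by simpa using (mem_filter.1 hf).2)]
  refine sum_congr rfl fun S hS => ?_
  rw [filter_filter, filter_congr fun f _ => and_iff_right_of_imp fun h => h ▸ (mem_filter.1 hS).2,
    filter_piFinset_support_eq hb, ← prod_univ_sum, ← prod_const,
    ← Fintype.prod_ite_mem S fun _ => ∑ t ∈ A, w t]
  exact Fintype.prod_congr _ _ fun i => by split_ifs <;> simp [hw]

section LexProd

variable {V₁ V₂ : Type*} [Fintype V₂]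

noncomputable def fiber (T : Finset (V₁ × V₂)) (a : V₁) : Finset V₂ := {x | (a, x) ∈ T}

@[simp]
theorem mem_fiber {T : Finset (V₁ × V₂)} {a : V₁} {x : V₂} : x ∈ fiber T a ↔ (a, x) ∈ T := by
  simp [fiber]

theorem card_eq_sum_card_fiber [Fintype V₁] (T : Finset (V₁ × V₂)) :
    #T = ∑ a, #(fiber T a) := by
  simp only [fiber, card_filter]
  rw [← Fintype.sum_prod_type' (fun a x => if (a, x) ∈ T then 1 else 0), ← card_filter]
  simp

theorem lexProd_indep_iff [Fintype V₁] (G₁ : SimpleGraph V₁) (G₂ : SimpleGraph V₂)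
    (T : Finset (V₁ × V₂)) :
    (∀ p ∈ T, ∀ q ∈ T, ¬(lexProd G₁ G₂).Adj p q) ↔
      (∀ a ∈ ({a | fiber T a ≠ ∅} : Finset V₁), ∀ b ∈ ({a | fiber T a ≠ ∅} : Finset V₁),
        ¬G₁.Adj a b) ∧ ∀ a, ∀ x ∈ fiber T a, ∀ y ∈ fiber T a, ¬G₂.Adj x y := by
  simp only [mem_filter, mem_univ, true_and, ← nonempty_iff_ne_empty, mem_fiber]
  constructor
  · intro h
    refine ⟨fun a ⟨x, hx⟩ b ⟨y, hy⟩ hab => ?_, fun a x hx y hy hxy => ?_⟩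
    · exact h (a, x) (mem_fiber.1 hx) (b, y) (mem_fiber.1 hy) (Or.inl hab)
    · exact h (a, x) hx (a, y) hy (Or.inr ⟨rfl, hxy⟩)
  · rintro ⟨h₁, h₂⟩ ⟨a, x⟩ hp ⟨b, y⟩ hq (hab | ⟨rfl, hxy⟩)
    · exact h₁ a ⟨x, mem_fiber.2 hp⟩ b ⟨y, mem_fiber.2 hq⟩ hab
    · exact h₂ a x hp y hq hxy

theorem indepPoly_lexProd_eq_sum_fibers [Fintype V₁] (G₁ : SimpleGraph V₁)
    (G₂ : SimpleGraph V₂) :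
    indepPoly (lexProd G₁ G₂) =
      ∑ f ∈ (Fintype.piFinset fun _ => ({t | ∀ x ∈ t, ∀ y ∈ t, ¬G₂.Adj x y} : Finset _))
        with ∀ a ∈ ({a | f a ≠ ∅} : Finset V₁), ∀ b ∈ ({a | f a ≠ ∅} : Finset V₁), ¬G₁.Adj a b,
        ∏ a, (X : ℝ[X]) ^ #(f a) := by
  have fiber_ofFibers (f : V₁ → Finset V₂) :
      fiber ({p | p.2 ∈ f p.1} : Finset (V₁ × V₂)) = f := by
    ext a x
    simp
  -- The decidability instance inside `indepPoly` is not the one synthesized for `V₁ × V₂`, so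
  -- `mem_filter` is applied with `simp only`: `rw` and `mem_filter.1` time out comparing them.
  unfold indepPoly
  refine sum_nbij' (fiber ·) (fun f => ({p | p.2 ∈ f p.1} : Finset (V₁ × V₂))) ?_ ?_ ?_ ?_ ?_
  · intro T hT
    simp only [mem_filter] at hT
    have := (lexProd_indep_iff G₁ G₂ T).1 hT.2
    simpa [Fintype.mem_piFinset] using And.symm this
  · intro f hf
    obtain ⟨hf₂, hf₁⟩ := mem_filter.1 hf
    have := (lexProd_indep_iff G₁ G₂ {p | p.2 ∈ f p.1}).2 <| by
      rw [fiber_ofFibers]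
      exact ⟨hf₁, fun a => (mem_filter.1 (Fintype.mem_piFinset.1 hf₂ a)).2⟩
    simpa only [mem_filter, mem_univ, true_and] using this
  · intro T _
    ext ⟨a, x⟩
    simp
  · intro f _
    exact fiber_ofFibers f
  · intro T _
    rw [card_eq_sum_card_fiber, prod_pow_eq_pow_sum]

end LexProd

/-- `I(G₁[G₂];x) = I(G₁; I(G₂;x) − 1)`. -/
theorem stmt18 {V₁ V₂ : Type*} [Fintype V₁] [Fintype V₂]
    (G₁ : SimpleGraph V₁) (G₂ : SimpleGraph V₂) :
    indepPoly (lexProd G₁ G₂) = (indepPoly G₁).comp (indepPoly G₂ - 1) := by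
  set indep₂ : Finset (Finset V₂) := {t | ∀ x ∈ t, ∀ y ∈ t, ¬G₂.Adj x y}
  have hempty : ∅ ∈ indep₂ := by simp [indep₂]
  have hsub : indepPoly G₂ - 1 = ∑ t ∈ indep₂.erase ∅, X ^ #t := by
    rw [indepPoly, ← add_sum_erase _ _ hempty]
    simp
  rw [indepPoly_lexProd_eq_sum_fibers, hsub, indepPoly, Polynomial.sum_comp]
  simp only [X_pow_comp]
  rw [← sum_piFinset_filter_support_prod_eq_sum_pow _ (notMem_erase ∅ indep₂) (fun t => X ^ #t)
    (pow_zero X) (fun s => ∀ u ∈ s, ∀ v ∈ s, ¬G₁.Adj u v), insert_erase hempty]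
end
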